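/- arXiv:1810.07219 — 13 statements merged into one kernel-verified Lean document; each statement's English description precedes it below -/
import Mathlib

section
/- Let T₁,…,Tₙ be pairwise disjoint finite sets with |Tᵢ| = tᵢ. The number P(t₁,…,tₙ) of permutations σ of the union ⋃ᵢ Tᵢ such that σ(a) ∉ Tᵢ for every i and every a ∈ Tᵢ is positive if and only if 2·tₖ ≤ t₁ + t₂ + ⋯ + tₙ holds for every k. -/
/-! Colour each element by the set containing it. A colour-changing permutation maps the
class of colour `k` injectively into its complement, which gives the necessity. Conversely,
Hall's marriage theorem applied to the relation "has a different colour" gives an injection,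
hence a permutation: a set meeting two colour classes is related to everything, and a set
inside class `k` is related to the whole complement of class `k`, which is at least as large. -/

/-- Number of generalized derangements of disjoint sets of sizes `t 0, …, t (n-1)`:
permutations of the disjoint union mapping no element into its own set. -/
def gdCount (n : ℕ) (t : Fin n → ℕ) : ℕ :=
  Fintype.card {σ : Equiv.Perm (Σ i : Fin n, Fin (t i)) // ∀ x, (σ x).1 ≠ x.1}

/-- Number of anagrams without fixed letters of the word with `t i` copies of letter `i`:
letter assignments to positions with the right letter counts and no position keeping
its original letter. -/
def aflCount (n : ℕ) (t : Fin n → ℕ) : ℕ :=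
  Fintype.card {w : (Σ i : Fin n, Fin (t i)) → Fin n //
    (∀ j, (Finset.univ.filter fun x => w x = j).card = t j) ∧ ∀ x, w x ≠ x.1}

open Finset

section

variable {α ι : Type*} [Fintype α] [DecidableEq ι] (c : α → ι)

theorem card_fiber_add_card_compl_fiber (k : ι) :
    #{x | c x = k} + #{x | c x ≠ k} = Fintype.card α :=
  card_filter_add_card_filter_not _

namespace Equiv.Perm

theorem two_mul_card_fiber_le_of_forall_ne {σ : Perm α} (hσ : ∀ x, c (σ x) ≠ c x) (k : ι) :
    2 * #{x | c x = k} ≤ Fintype.card α := by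
  have hmaps : #{x | c x = k} ≤ #{x | c x ≠ k} :=
    card_le_card_of_injOn σ (fun x hx => by simp_all [← (mem_filter.1 hx).2]) σ.injective.injOn
  have := card_fiber_add_card_compl_fiber c k
  omega

theorem card_le_card_image_ne_of_two_mul_card_fiber_le
    (h : ∀ k, 2 * #{x | c x = k} ≤ Fintype.card α) (A : Finset α) :
    #A ≤ #{y | ∃ x ∈ A, c y ≠ c x} := by
  by_cases hmono : ∃ k, ∀ x ∈ A, c x = k
  · obtain ⟨k, hk⟩ := hmono
    rcases A.eq_empty_or_nonempty with rfl | ⟨x₀, hx₀⟩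
    · simp
    calc #A ≤ #{x | c x = k} := card_le_card fun x hx => by simpa using hk x hx
      _ ≤ #{x | c x ≠ k} := by have := h k; have := card_fiber_add_card_compl_fiber c k; omega
      _ ≤ #{y | ∃ x ∈ A, c y ≠ c x} :=
        card_le_card fun y hy => by
          simp only [mem_filter, mem_univ, true_and] at hy ⊢
          exact ⟨x₀, hx₀, hk x₀ hx₀ ▸ hy⟩
  · push Not at hmono
    suffices h : ∀ y, ∃ x ∈ A, c y ≠ c x by
      calc #A ≤ Fintype.card α := card_le_univ A
        _ = _ := by rw [← card_univ]; congr; ext y; simpa using h y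
    intro y
    obtain ⟨x, hx, hxy⟩ := hmono (c y)
    exact ⟨x, hx, Ne.symm hxy⟩

theorem exists_forall_ne_of_two_mul_card_fiber_le
    (h : ∀ k, 2 * #{x | c x = k} ≤ Fintype.card α) :
    ∃ σ : Perm α, ∀ x, c (σ x) ≠ c x := by
  classical
  obtain ⟨f, hf, hfc⟩ := (Fintype.all_card_le_filter_rel_iff_exists_injective
    (fun x y => c y ≠ c x)).1 (card_le_card_image_ne_of_two_mul_card_fiber_le c h)
  exact ⟨Equiv.ofBijective f hf.bijective_of_finite, hfc⟩

theorem exists_forall_ne_iff :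
    (∃ σ : Perm α, ∀ x, c (σ x) ≠ c x) ↔ ∀ k, 2 * #{x | c x = k} ≤ Fintype.card α :=
  ⟨fun ⟨_, hσ⟩ => two_mul_card_fiber_le_of_forall_ne c hσ,
    exists_forall_ne_of_two_mul_card_fiber_le c⟩

end Equiv.Perm

end

theorem Finset.card_filter_sigma_fst_eq {ι : Type*} [Fintype ι] [DecidableEq ι] (β : ι → Type*)
    [∀ i, Fintype (β i)] (k : ι) :
    #{x : Σ i, β i | x.1 = k} = Fintype.card (β k) := by
  rw [← card_univ, ← card_map (Function.Embedding.sigmaMk k)]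
  congr
  ext ⟨i, b⟩
  simp only [mem_filter, mem_univ, true_and, mem_map, Function.Embedding.sigmaMk_apply,
    Sigma.mk.injEq, exists_and_left]
  exact ⟨fun h => ⟨h.symm, by subst h; exact ⟨b, heq_of_eq rfl⟩⟩, fun ⟨h, _⟩ => h.symm⟩

theorem gd_pos_iff (n : ℕ) (t : Fin n → ℕ) :
    0 < gdCount n t ↔ ∀ k, 2 * t k ≤ ∑ i, t i := by
  rw [gdCount, Fintype.card_pos_iff, nonempty_subtype, Equiv.Perm.exists_forall_ne_iff,
    Fintype.card_sigma]
  simp [Finset.card_filter_sigma_fst_eq]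
end

section
/- For n ≥ 2, the number of generalized derangements P(2,1,1,…,1) (with one set of size 2 and n−2 sets of size 1, for a total of n elements) equals d(n) − 2·d(n−1) − d(n−2), where d(m) denotes the number of derangements of m elements. -/
/-! Let `a, b` be the two elements of the doubleton block; the permutations counted are the
derangements with `σ a ≠ b` and `σ b ≠ a`. If `σ a = b`, then `swap a b * σ` fixes `a`, fixes `b`
iff `σ b = a`, and fixes some other point iff `σ` does. Hence derangements with `σ a = b, σ b = a`
(resp. `σ a = b, σ b ≠ a`) correspond to permutations with fixed-point set `{a, b}` (resp. `{a}`),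
of which there are `d(n-2)` (resp. `d(n-1)`). Removing these two classes and the mirror image
`σ b = a, σ a ≠ b` of the second from all derangements leaves `d(n) - 2 d(n-1) - d(n-2)`. -/

open Equiv Function

namespace Equiv.Perm

variable {α : Type*} [DecidableEq α]

theorem card_fixedPoints_eq [Fintype α] (s : Finset α) :
    Fintype.card {f : Perm α // fixedPoints f = s} =
      numDerangements (Fintype.card α - s.card) := by
  rw [← Finset.card_compl, ← Fintype.card_coe, ← card_derangements_eq_numDerangements]
  refine (Fintype.card_congr <| (derangements.subtypeEquiv (· ∈ sᶜ)).trans <|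
    subtypeEquivRight fun f => ?_).symm
  simpa [Set.ext_iff] using forall_congr' fun _ => iff_comm

theorem mem_fixedPoints_swap_mul_iff {a b x : α} {σ : Perm α} :
    x ∈ fixedPoints (swap a b * σ) ↔ σ x = swap a b x := by
  simp [IsFixedPt, swap_apply_eq_iff]

theorem fixedPoints_swap_mul_eq_pair_iff {a b : α} (hab : a ≠ b) (σ : Perm α) :
    fixedPoints (swap a b * σ) = {a, b} ↔ σ ∈ derangements α ∧ σ a = b ∧ σ b = a := by
  simp only [Set.ext_iff, mem_fixedPoints_swap_mul_iff, Set.mem_insert_iff,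
    Set.mem_singleton_iff, derangements, Set.mem_ofPred_eq, swap_apply_def]
  grind [EmbeddingLike.apply_eq_iff_eq]

theorem fixedPoints_swap_mul_eq_singleton_iff {a b : α} (hab : a ≠ b) (σ : Perm α) :
    fixedPoints (swap a b * σ) = {a} ↔ σ ∈ derangements α ∧ σ a = b ∧ σ b ≠ a := by
  simp only [Set.ext_iff, mem_fixedPoints_swap_mul_iff,
    Set.mem_singleton_iff, derangements, Set.mem_ofPred_eq, swap_apply_def]
  grind [EmbeddingLike.apply_eq_iff_eq]

theorem forall_apply_ne_iff_of_eq_iff_swap {β : Type*} {π : α → β} {a b : α}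
    (hπ : ∀ x y, π x = π y ↔ x = y ∨ x = swap a b y) (σ : Perm α) :
    (∀ x, π (σ x) ≠ π x) ↔ σ ∈ derangements α ∧ σ a ≠ b ∧ σ b ≠ a := by
  simp only [ne_eq, hπ, not_or, forall_and, swap_apply_def, derangements, Set.mem_ofPred_eq]
  grind

variable [Fintype α] {a b : α}

theorem card_derangements_apply_eq_and_apply_eq (hab : a ≠ b) :
    Fintype.card {σ : Perm α // σ ∈ derangements α ∧ σ a = b ∧ σ b = a} =
      numDerangements (Fintype.card α - 2) := by
  rw [← Finset.card_pair hab, ← card_fixedPoints_eq, Finset.coe_pair]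
  exact Fintype.card_congr <| (Equiv.mulLeft (swap a b)).subtypeEquiv fun σ =>
    (fixedPoints_swap_mul_eq_pair_iff hab σ).symm

theorem card_derangements_apply_eq_and_apply_ne (hab : a ≠ b) :
    Fintype.card {σ : Perm α // σ ∈ derangements α ∧ σ a = b ∧ σ b ≠ a} =
      numDerangements (Fintype.card α - 1) := by
  rw [← Finset.card_singleton a, ← card_fixedPoints_eq, Finset.coe_singleton]
  exact Fintype.card_congr <| (Equiv.mulLeft (swap a b)).subtypeEquiv fun σ =>
    (fixedPoints_swap_mul_eq_singleton_iff hab σ).symm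

theorem card_derangements_apply_ne_and_apply_ne (hab : a ≠ b) :
    Fintype.card {σ : Perm α // σ ∈ derangements α ∧ σ a ≠ b ∧ σ b ≠ a} +
        2 * numDerangements (Fintype.card α - 1) + numDerangements (Fintype.card α - 2) =
      numDerangements (Fintype.card α) := by
  have hba : Fintype.card {σ : Perm α // σ ∈ derangements α ∧ σ a ≠ b ∧ σ b = a} =
      numDerangements (Fintype.card α - 1) := by
    rw [← card_derangements_apply_eq_and_apply_ne hab.symm]
    exact Fintype.card_congr <| subtypeEquivRight fun _ => and_congr_right' and_comm
  have hpart : Fintype.card (derangements α) =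
      Fintype.card {σ : Perm α // σ ∈ derangements α ∧ σ a = b ∧ σ b = a} +
        Fintype.card {σ : Perm α // σ ∈ derangements α ∧ σ a = b ∧ σ b ≠ a} +
        Fintype.card {σ : Perm α // σ ∈ derangements α ∧ σ a ≠ b ∧ σ b = a} +
        Fintype.card {σ : Perm α // σ ∈ derangements α ∧ σ a ≠ b ∧ σ b ≠ a} := by
    simp only [Fintype.card_subtype, ← Finset.filter_filter]
    rw [← Finset.card_filter_add_card_filter_not (p := fun σ : Perm α => σ a = b),
      ← Finset.card_filter_add_card_filter_not (p := fun σ : Perm α => σ b = a),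
      ← Finset.card_filter_add_card_filter_not (p := fun σ : Perm α => σ b = a)
        (s := Finset.filter (fun σ : Perm α => σ a ≠ b) _)]
    simp only [ne_eq, add_assoc]
  rw [card_derangements_eq_numDerangements, card_derangements_apply_eq_and_apply_eq hab,
    card_derangements_apply_eq_and_apply_ne hab, hba] at hpart
  omega

end Equiv.Perm

theorem Sigma.fin_ext_iff {ι : Type*} {t : ι → ℕ} {x y : Σ i, Fin (t i)} :
    x = y ↔ x.1 = y.1 ∧ (x.2 : ℕ) = y.2 := by
  rw [Sigma.ext_iff]
  exact and_congr_right fun h => Fin.heq_ext_iff (congrArg t h)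

namespace TwoOnes

variable {k : ℕ} (hk : 0 < k)

def sizes : Fin k → ℕ := fun i => if i = ⟨0, hk⟩ then 2 else 1

def left : Σ i, Fin (sizes hk i) := ⟨⟨0, hk⟩, ⟨0, by simp [sizes]⟩⟩

def right : Σ i, Fin (sizes hk i) := ⟨⟨0, hk⟩, ⟨1, by simp [sizes]⟩⟩

theorem left_ne_right : left hk ≠ right hk := by
  simp [left, right]

theorem card_sigma : Fintype.card (Σ i, Fin (sizes hk i)) = k + 1 := by
  rw [Fintype.card_sigma]
  simp only [Fintype.card_fin]
  simp [sizes, Finset.sum_ite, Finset.filter_ne', Finset.filter_eq']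
  omega

theorem val_fst_snd_cases (z : Σ i, Fin (sizes hk i)) :
    (z.1 : ℕ) = 0 ∧ (z.2 : ℕ) < 2 ∨ (z.1 : ℕ) ≠ 0 ∧ (z.2 : ℕ) = 0 := by
  have hz := z.2.isLt
  unfold sizes at hz
  split_ifs at hz with h
  · exact .inl ⟨congrArg Fin.val h, hz⟩
  · exact .inr ⟨fun h' => h (Fin.ext h'), by omega⟩

theorem fst_eq_iff (x y : Σ i, Fin (sizes hk i)) :
    x.1 = y.1 ↔ x = y ∨ x = swap (left hk) (right hk) y := by
  have hx := val_fst_snd_cases hk x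
  have hy := val_fst_snd_cases hk y
  rw [swap_apply_def]
  split_ifs <;> simp only [Sigma.fin_ext_iff, left, right, Fin.ext_iff] at * <;> omega

end TwoOnes

open Equiv.Perm in
theorem gd_two_ones (n : ℕ) (hn : 2 ≤ n) :
    (gdCount (n - 1) (fun i => if i = ⟨0, by omega⟩ then 2 else 1) : ℤ) =
      numDerangements n - 2 * numDerangements (n - 1) - numDerangements (n - 2) := by
  obtain ⟨k, rfl⟩ : ∃ k, n = k + 1 := ⟨n - 1, by omega⟩
  have hk : 0 < k := by omega
  have hcount := card_derangements_apply_ne_and_apply_ne (TwoOnes.left_ne_right hk)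
  rw [TwoOnes.card_sigma] at hcount
  have hgd : gdCount k (TwoOnes.sizes hk) =
      Fintype.card {σ : Perm (Σ i, Fin (TwoOnes.sizes hk i)) // σ ∈ derangements _ ∧
        σ (TwoOnes.left hk) ≠ TwoOnes.right hk ∧ σ (TwoOnes.right hk) ≠ TwoOnes.left hk} :=
    Fintype.card_congr <| Equiv.subtypeEquivRight
      (forall_apply_ne_iff_of_eq_iff_swap (TwoOnes.fst_eq_iff hk))
  change (gdCount k (TwoOnes.sizes hk) : ℤ) = _
  simp only [add_tsub_cancel_right] at hcount ⊢
  omega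
end

section
/- If t₁ = t₂ + t₃ + ⋯ + tₙ, then the number of generalized derangements satisfies P(t₁,t₂,…,tₙ) = (t₁!)². -/
section PermSubtype

variable {α : Type*} {p q : α → Prop} [DecidablePred p] [DecidablePred q]

theorem Equiv.Perm.apply_iff_of_mapsTo_of_card_le [Fintype α] (σ : Equiv.Perm α)
    (hmaps : ∀ x, p x → q (σ x))
    (hcard : Fintype.card {x // q x} ≤ Fintype.card {x // p x}) (x : α) :
    q (σ x) ↔ p x := by
  rw [Fintype.card_subtype, Fintype.card_subtype] at hcard
  have himage : (Finset.univ.filter p).map σ.toEmbedding = Finset.univ.filter q :=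
    Finset.eq_of_subset_of_card_le (fun y hy => by
      obtain ⟨x, hx, rfl⟩ := Finset.mem_map.mp hy
      simpa using hmaps x (by simpa using hx)) (by simpa using hcard)
  simpa using (congrArg (σ x ∈ ·) himage).symm

variable (p q) in
def Equiv.Perm.subtypeCongrEquiv :
    {σ : Equiv.Perm α // ∀ x, q (σ x) ↔ p x} ≃
      ({x // p x} ≃ {x // q x}) × ({x // ¬p x} ≃ {x // ¬q x}) where
  toFun σ := (σ.1.subtypeEquiv fun x => (σ.2 x).symm,
    σ.1.subtypeEquiv fun x => (not_congr (σ.2 x)).symm)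
  invFun ef := ⟨Equiv.subtypeCongr ef.1 ef.2, fun x => by
    by_cases hx : p x
    · simp [Equiv.subtypeCongr, Equiv.sumCompl_symm_apply_of_pos hx, hx, (ef.1 ⟨x, hx⟩).2]
    · simp [Equiv.subtypeCongr, Equiv.sumCompl_symm_apply_of_neg hx, hx, (ef.2 ⟨x, hx⟩).2]⟩
  left_inv σ := by
    ext x
    by_cases hx : p x
    · simp [Equiv.subtypeCongr, Equiv.sumCompl_symm_apply_of_pos hx]
    · simp [Equiv.subtypeCongr, Equiv.sumCompl_symm_apply_of_neg hx]
  right_inv ef := by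
    ext x <;> simp [Equiv.subtypeCongr, Equiv.sumCompl_symm_apply_of_pos,
      Equiv.sumCompl_symm_apply_of_neg, x.2]

theorem Equiv.Perm.card_subtype_apply_iff [Fintype α] [DecidableEq α]
    (hpq : Fintype.card {x // p x} = Fintype.card {x // q x}) :
    Fintype.card {σ : Equiv.Perm α // ∀ x, q (σ x) ↔ p x} =
      (Fintype.card {x // p x}).factorial * (Fintype.card {x // ¬p x}).factorial := by
  have hnpq : Fintype.card {x // ¬p x} = Fintype.card {x // ¬q x} := by
    rw [Fintype.card_subtype_compl, Fintype.card_subtype_compl, hpq]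
  rw [Fintype.card_congr (Equiv.Perm.subtypeCongrEquiv p q), Fintype.card_prod,
    Fintype.card_equiv (Fintype.equivOfCardEq hpq),
    Fintype.card_equiv (Fintype.equivOfCardEq hnpq)]

end PermSubtype

theorem gd_half_sum (n : ℕ) (t : Fin (n + 1) → ℕ) (h : t 0 = ∑ i : Fin n, t i.succ) :
    gdCount (n + 1) t = Nat.factorial (t 0) ^ 2 := by
  classical
  have hA : Fintype.card {x : Σ i, Fin (t i) // x.1 = 0} = t 0 := by
    rw [Fintype.card_congr (Equiv.sigmaSubtype 0), Fintype.card_fin]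
  have hB : Fintype.card {x : Σ i, Fin (t i) // ¬x.1 = 0} = t 0 := by
    simp only [Fintype.card_subtype_compl, hA, Fintype.card_sigma, Fintype.card_fin,
      Fin.sum_univ_succ, ← h]
    omega
  have hswap : ∀ σ : Equiv.Perm (Σ i, Fin (t i)),
      (∀ x, (σ x).1 ≠ x.1) ↔ ∀ x, ¬(σ x).1 = 0 ↔ x.1 = 0 := by
    refine fun σ => ⟨fun hσ => σ.apply_iff_of_mapsTo_of_card_le
      (fun x hx => hx ▸ hσ x) (hB.trans hA.symm).le, fun hσ x => ?_⟩
    by_cases hx : x.1 = 0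
    · simpa [hx] using hσ x
    · simpa [not_not.mp ((hσ x).not.mpr hx)] using Ne.symm hx
  rw [gdCount, Fintype.card_congr (Equiv.subtypeEquivRight hswap),
    Equiv.Perm.card_subtype_apply_iff (hA.trans hB.symm), hA, hB, sq]
end

section
/- If t₁ = t₂ + t₃ + ⋯ + tₙ, then the number of anagrams without fixed letters satisfies P'(t₁,t₂,…,tₙ) = t₁!/(t₂!·t₃!⋯tₙ!), the multinomial coefficient (t₁ choose t₂,t₃,…,tₙ). -/
/-!
Letter `0` may not stand in its own block, so its `t 0` copies occupy `t 0` of the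
`t 1 + ⋯ + t n = t 0` positions outside that block, that is, all of them. An anagram without fixed
letters is therefore the word `0 ⋯ 0` outside block `0` together with an arbitrary arrangement of
the letters `1, …, n`, with multiplicities `t 1, …, t n`, on block `0`.

Those arrangements are counted by orbit–stabilizer: the permutations of the positions act
transitively on the words with prescribed letter multiplicities, and the stabilizer of a word is
the product of the symmetric groups of its fibres.
-/

open Finset Equiv

section FiberCount

variable {α ι : Type*} [Fintype α] [DecidableEq ι]

theorem exists_perm_comp_eq_iff_card_fiber_eq {f g : α → ι} :
    (∃ σ : Perm α, f ∘ σ = g) ↔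
      ∀ i, Fintype.card {a // f a = i} = Fintype.card {a // g a = i} := by
  constructor
  · rintro ⟨σ, rfl⟩ i
    exact Fintype.card_congr (σ.subtypeEquiv fun _ => Iff.rfl).symm
  · intro h
    classical
    exact ⟨ofFiberEquiv fun i => Fintype.equivOfCardEq (h i).symm,
      funext (ofFiberEquiv_map _)⟩

theorem exists_card_fiber_eq [Fintype ι] (c : ι → ℕ) (hc : Fintype.card α = ∑ i, c i) :
    ∃ f : α → ι, ∀ i, Fintype.card {a // f a = i} = c i := by
  have e : α ≃ Σ i, Fin (c i) := Fintype.equivOfCardEq (by simp [hc])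
  refine ⟨fun a => (e a).1, fun i => ?_⟩
  rw [Fintype.card_congr ((e.subtypeEquiv (q := fun x => x.1 = i) fun _ => Iff.rfl).trans
    (sigmaSubtype i)), Fintype.card_fin]

theorem natCard_fun_with_card_fiber_eq_multinomial [Fintype ι] (c : ι → ℕ)
    (hc : Fintype.card α = ∑ i, c i) :
    Nat.card {f : α → ι // ∀ i, Fintype.card {a // f a = i} = c i} =
      Nat.multinomial univ c := by
  classical
  obtain ⟨f, hf⟩ := exists_card_fiber_eq c hc
  have orbit_eq :
      MulAction.orbit (Perm α)ᵈᵐᵃ f = {g | ∀ i, Fintype.card {a // g a = i} = c i} := by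
    ext g
    have hfg : (∀ i, Fintype.card {a // g a = i} = c i) ↔
        ∀ i, Fintype.card {a // f a = i} = Fintype.card {a // g a = i} :=
      forall_congr' fun i => by rw [hf, eq_comm]
    rw [MulAction.mem_orbit_iff, Set.mem_ofPred_eq, hfg, ← exists_perm_comp_eq_iff_card_fiber_eq]
    exact DomMulAct.mk.symm.exists_congr_left
  have card_stabilizer :
      Nat.card (MulAction.stabilizer (Perm α)ᵈᵐᵃ f) = ∏ i, (c i).factorial := by
    rw [Nat.card_congr (subtypeEquiv (q := fun σ : Perm α => f ∘ σ = f) DomMulAct.mk.symm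
        fun _ => DomMulAct.mem_stabilizer_iff),
      Nat.card_eq_fintype_card, DomMulAct.stabilizer_card]
    simp only [hf]
  have orbit_stabilizer := (MulAction.stabilizer (Perm α)ᵈᵐᵃ f).card_mul_index
  rw [MulAction.index_stabilizer, orbit_eq, card_stabilizer, ← Nat.card_coe_set_eq,
    Nat.card_congr DomMulAct.mk.symm, Nat.card_perm, Nat.card_eq_fintype_card (α := α), hc,
    ← Nat.multinomial_spec] at orbit_stabilizer
  exact Nat.eq_of_mul_eq_mul_left (by positivity) orbit_stabilizer

end FiberCount

section Anagram

variable {n : ℕ} {t : Fin (n + 1) → ℕ}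

theorem card_sigma_fst_ne_zero :
    Fintype.card {x : Σ i : Fin (n + 1), Fin (t i) // x.1 ≠ 0} = ∑ i : Fin n, t i.succ := by
  rw [Fintype.card_subtype_compl, Fintype.card_congr (sigmaSubtype 0)]
  simp [Fin.sum_univ_succ]

theorem anagram_eq_zero_iff_fst_ne_zero (h : t 0 = ∑ i : Fin n, t i.succ)
    {w : (Σ i : Fin (n + 1), Fin (t i)) → Fin (n + 1)}
    (hcount : ∀ j, Fintype.card {x // w x = j} = t j) (hfix : ∀ x, w x ≠ x.1)
    (x : Σ i : Fin (n + 1), Fin (t i)) :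
    w x = 0 ↔ x.1 ≠ 0 := by
  have hsub : univ.filter (w · = 0) ⊆ univ.filter (·.1 ≠ 0) := by
    intro y
    simp only [mem_filter, mem_univ, true_and]
    exact fun hy hy0 => hfix y (hy.trans hy0.symm)
  have hfiber := eq_of_subset_of_card_le hsub <| by
    rw [← Fintype.card_subtype, ← Fintype.card_subtype, card_sigma_fst_ne_zero, hcount, h]
  simpa using congrArg (x ∈ ·) hfiber

theorem card_fiber_succ_of_eq_zero_iff {w : (Σ i : Fin (n + 1), Fin (t i)) → Fin (n + 1)}
    (hw : ∀ x, w x = 0 ↔ x.1 ≠ 0) (j : Fin n) :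
    Fintype.card {b : {x : Σ i : Fin (n + 1), Fin (t i) // x.1 = 0} // w b = j.succ} =
      Fintype.card {x // w x = j.succ} :=
  Fintype.card_congr <| subtypeSubtypeEquivSubtype fun {x} (hx : w x = j.succ) =>
    not_not.mp fun hx0 => j.succ_ne_zero (hx.symm.trans ((hw x).mpr hx0))

def extendByZero (v : {x : Σ i : Fin (n + 1), Fin (t i) // x.1 = 0} → Fin n)
    (x : Σ i : Fin (n + 1), Fin (t i)) : Fin (n + 1) :=
  if hx : x.1 = 0 then (v ⟨x, hx⟩).succ else 0

theorem extendByZero_coe (v : {x : Σ i : Fin (n + 1), Fin (t i) // x.1 = 0} → Fin n)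
    (b : {x : Σ i : Fin (n + 1), Fin (t i) // x.1 = 0}) :
    extendByZero v b = (v b).succ :=
  dif_pos b.2

theorem extendByZero_eq_zero_iff (v : {x : Σ i : Fin (n + 1), Fin (t i) // x.1 = 0} → Fin n)
    (x : Σ i : Fin (n + 1), Fin (t i)) :
    extendByZero v x = 0 ↔ x.1 ≠ 0 := by
  unfold extendByZero
  split_ifs with hx <;> simp [hx, Fin.succ_ne_zero]

def anagramEquivWordOnBlockZero (h : t 0 = ∑ i : Fin n, t i.succ) :
    {w : (Σ i : Fin (n + 1), Fin (t i)) → Fin (n + 1) //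
      (∀ j, Fintype.card {x // w x = j} = t j) ∧ ∀ x, w x ≠ x.1} ≃
    {v : {x : Σ i : Fin (n + 1), Fin (t i) // x.1 = 0} → Fin n //
      ∀ j, Fintype.card {b // v b = j} = t j.succ} where
  toFun w := ⟨fun b => (w.1 b).pred fun hb => w.2.2 b (hb.trans b.2.symm), fun j => by
    rw [← w.2.1 j.succ,
      ← card_fiber_succ_of_eq_zero_iff (anagram_eq_zero_iff_fst_ne_zero h w.2.1 w.2.2)]
    simp only [Fin.pred_eq_iff_eq_succ]⟩
  invFun v := ⟨extendByZero v.1, fun j => by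
    cases j using Fin.cases with
    | zero =>
      rw [h, ← card_sigma_fst_ne_zero]
      exact Fintype.card_congr (subtypeEquivRight (extendByZero_eq_zero_iff v.1))
    | succ j =>
      rw [← card_fiber_succ_of_eq_zero_iff (extendByZero_eq_zero_iff v.1), ← v.2 j]
      exact Fintype.card_congr
        (subtypeEquivRight fun b => by rw [extendByZero_coe, Fin.succ_inj]),
    fun x hx => by
      have hx0 := extendByZero_eq_zero_iff v.1 x
      rw [hx] at hx0
      exact iff_not_self hx0⟩
  left_inv w := by
    ext1; funext x
    by_cases hx : x.1 = 0
    · exact (extendByZero_coe _ ⟨x, hx⟩).trans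
        (Fin.succ_pred _ fun hw => w.2.2 x (hw.trans hx.symm))
    · exact ((extendByZero_eq_zero_iff _ x).mpr hx).trans
        ((anagram_eq_zero_iff_fst_ne_zero h w.2.1 w.2.2 x).mpr hx).symm
  right_inv v := by
    ext1; funext b
    dsimp only
    exact (Fin.pred_eq_iff_eq_succ _).mpr (extendByZero_coe v.1 b)

theorem aflCount_eq_card_subtype : aflCount (n + 1) t =
    Nat.card {w : (Σ i : Fin (n + 1), Fin (t i)) → Fin (n + 1) //
      (∀ j, Fintype.card {x // w x = j} = t j) ∧ ∀ x, w x ≠ x.1} := by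
  rw [aflCount, ← Nat.card_eq_fintype_card]
  simp only [Fintype.card_subtype]

end Anagram

theorem afl_half_sum (n : ℕ) (t : Fin (n + 1) → ℕ) (h : t 0 = ∑ i : Fin n, t i.succ) :
    aflCount (n + 1) t = Nat.multinomial Finset.univ (fun i : Fin n => t i.succ) := by
  have card_block_zero : Fintype.card {x : Σ i : Fin (n + 1), Fin (t i) // x.1 = 0} =
      ∑ i : Fin n, t i.succ := by
    rw [Fintype.card_congr (sigmaSubtype 0), Fintype.card_fin, h]
  rw [aflCount_eq_card_subtype, Nat.card_congr (anagramEquivWordOnBlockZero h)]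
  exact natCard_fun_with_card_fiber_eq_multinomial _ card_block_zero
end

section
/- With f(t₁,t₂,l) = Σ_{l₁=0}^{l} C(t₁,l₁)C(t₂,l₁)l₁!·C(t₁,l−l₁)C(t₂,l−l₁)(l−l₁)!, the number of generalized derangements satisfies P(t₁,t₂,t₃,…,tₙ) = Σ_{l=0}^{t₁+t₂} f(t₁,t₂,l)·P(t₁+t₂−l, t₃,…,tₙ). -/
/-- `f t₁ t₂ l` from the paper. -/
def fGD (t₁ t₂ l : ℕ) : ℕ :=
  ∑ l₁ ∈ Finset.range (l + 1),
    t₁.choose l₁ * t₂.choose l₁ * Nat.factorial l₁ * t₁.choose (l - l₁) * t₂.choose (l - l₁) * Nat.factorial (l - l₁)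

/-!
A generalized derangement `σ` of `T₁ ⊔ T₂ ⊔ R` is sorted by what it does between `T₁` and `T₂`:
the points of `T₁` it sends into `T₂` form a partial injection `T₁ ⇀ T₂`, and likewise
`T₂ ⇀ T₁`. With domains of sizes `l₁` and `l₂` there are
`C(t₁,l₁) C(t₂,l₁) l₁! · C(t₂,l₂) C(t₁,l₂) l₂!` such pairs, and summing over `l₁ + l₂ = l` gives
`f(t₁,t₂,l)`. Once the pair is fixed, `σ` is determined by its restriction to the remaining points;
since the unmatched points of `T₁ ⊔ T₂` can only go to `R`, that restriction is a derangement in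
which the unmatched sources and the unmatched targets (both `t₁ + t₂ - l` points) form a single
merged set. Such counts depend only on the sizes of the colour classes, which gives
`P(t₁ + t₂ - l, t₃, …, tₙ)`.
-/

open Finset

namespace Equiv

theorem subtypeCongr_apply_of_pos {α : Type*} {p q : α → Prop} [DecidablePred p] [DecidablePred q]
    (e : {x // p x} ≃ {x // q x}) (f : {x // ¬p x} ≃ {x // ¬q x}) {x : α} (hx : p x) :
    e.subtypeCongr f x = e ⟨x, hx⟩ := by
  simp [subtypeCongr, sumCompl_symm_apply_of_pos hx]

theorem subtypeCongr_apply_of_neg {α : Type*} {p q : α → Prop} [DecidablePred p] [DecidablePred q]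
    (e : {x // p x} ≃ {x // q x}) (f : {x // ¬p x} ≃ {x // ¬q x}) {x : α} (hx : ¬p x) :
    e.subtypeCongr f x = f ⟨x, hx⟩ := by
  simp [subtypeCongr, sumCompl_symm_apply_of_neg hx]

end Equiv

theorem card_subtype_sum {α β : Type} (p : α ⊕ β → Prop) [Fintype {x // p x}]
    [Fintype {a // p (.inl a)}] [Fintype {b // p (.inr b)}] :
    Fintype.card {x // p x} = Fintype.card {a // p (.inl a)} + Fintype.card {b // p (.inr b)} := by
  rw [Fintype.card_congr Equiv.subtypeSum, Fintype.card_sum]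

theorem card_sigma_fst_eq {κ : Type} (s : κ → ℕ) (i : κ)
    [Fintype {x : Σ j, Fin (s j) // x.1 = i}] :
    Fintype.card {x : Σ j, Fin (s j) // x.1 = i} = s i := by
  rw [Fintype.card_congr (Equiv.sigmaSubtype i), Fintype.card_fin]

section Derangement

variable {X Y X' Y' ι ι' : Type} [Fintype X] [Fintype Y] [Fintype X'] [Fintype Y']
  [DecidableEq X] [DecidableEq Y] [DecidableEq X'] [DecidableEq Y'] [DecidableEq ι] [DecidableEq ι']

/-- For one colouring `k`, `derangementCount k k` is `P` of the sizes of the colour classes.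
Two colourings are allowed because a derangement restricted to the points off a fixed partial
map is a bijection between two different subsets. -/
def derangementCount (kX : X → ι) (kY : Y → ι) : ℕ :=
  Fintype.card {e : X ≃ Y // ∀ x, kY (e x) ≠ kX x}

theorem derangementCount_congr {kX : X → ι} {kY : Y → ι} {kX' : X' → ι'} {kY' : Y' → ι'}
    (ρ : ι ≃ ι') (hX : ∀ i, Fintype.card {x // kX x = i} = Fintype.card {x // kX' x = ρ i})
    (hY : ∀ i, Fintype.card {y // kY y = i} = Fintype.card {y // kY' y = ρ i}) :
    derangementCount kX kY = derangementCount kX' kY' := by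
  have fiberEquiv {Z Z' : Type} [Fintype Z] [Fintype Z'] {k : Z → ι} {k' : Z' → ι'}
      (h : ∀ i, Fintype.card {z // k z = i} = Fintype.card {z // k' z = ρ i}) :
      ∀ i', {z // ρ (k z) = i'} ≃ {z // k' z = i'} := fun i' =>
    Fintype.equivOfCardEq <| by
      simpa [← ρ.eq_symm_apply] using h (ρ.symm i')
  set u := Equiv.ofFiberEquiv (fiberEquiv hX)
  set v := Equiv.ofFiberEquiv (fiberEquiv hY)
  have hu : ∀ x, kX' (u x) = ρ (kX x) := Equiv.ofFiberEquiv_map _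
  have hv : ∀ y, kY' (v y) = ρ (kY y) := Equiv.ofFiberEquiv_map _
  refine Fintype.card_congr <| (u.equivCongr v).subtypeEquiv fun e => ?_
  refine u.forall_congr fun x => ?_
  simp only [Equiv.equivCongr_apply_apply, Equiv.symm_apply_apply, hu, hv, ρ.injective.ne_iff]

theorem derangementCount_congr_of_equiv {kX : X → ι} {kY : Y → ι} {kX' : X' → ι} {kY' : Y' → ι}
    (u : X ≃ X') (v : Y ≃ Y') (hu : ∀ x, kX' (u x) = kX x) (hv : ∀ y, kY' (v y) = kY y) :
    derangementCount kX kY = derangementCount kX' kY' :=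
  derangementCount_congr (Equiv.refl ι)
    (fun _ => Fintype.card_congr <| u.subtypeEquiv fun x => by simp [hu])
    (fun _ => Fintype.card_congr <| v.subtypeEquiv fun y => by simp [hv])

end Derangement

section PartialInj

variable {α β : Type}

def IsPartialInj (f : α → Option β) : Prop :=
  ∀ ⦃x y b⦄, f x = some b → f y = some b → x = y

instance [Fintype α] [Fintype β] [DecidableEq α] [DecidableEq β] :
    DecidablePred (IsPartialInj (α := α) (β := β)) :=
  fun _ => by unfold IsPartialInj; infer_instance

theorem IsPartialInj.get_injective {f : α → Option β} (hf : IsPartialInj f) {x y : α}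
    (hx : (f x).isSome) (hy : (f y).isSome) (h : (f x).get hx = (f y).get hy) : x = y :=
  hf (Option.some_get hx).symm (h ▸ (Option.some_get hy).symm)

noncomputable def IsPartialInj.domainEquivRange {f : α → Option β} (hf : IsPartialInj f) :
    {x // (f x).isSome} ≃ {y // ∃ x, f x = some y} :=
  Equiv.ofBijective (fun x => ⟨(f x).get x.2, x, by simp⟩)
    ⟨fun x y h => Subtype.ext (hf.get_injective _ _ (congrArg Subtype.val h)),
      fun ⟨y, x, hx⟩ => ⟨⟨x, by simp [hx]⟩, by simp [hx]⟩⟩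

@[simp]
theorem IsPartialInj.domainEquivRange_apply {f : α → Option β} (hf : IsPartialInj f)
    (x : {x // (f x).isSome}) : (hf.domainEquivRange x : β) = (f x).get x.2 :=
  rfl

variable [Fintype α]

def partialDomain (f : α → Option β) : Finset α := {x | (f x).isSome}

@[simp]
theorem mem_partialDomain {f : α → Option β} {x : α} : x ∈ partialDomain f ↔ (f x).isSome := by
  simp [partialDomain]

theorem card_subtype_eq_none [DecidableEq α] (f : α → Option β) :
    Fintype.card {x // f x = none} = Fintype.card α - #(partialDomain f) := by
  rw [Fintype.card_subtype, ← card_compl, partialDomain, compl_filter]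
  simp

variable [Fintype β] [DecidableEq β]

def partialRange (f : α → Option β) : Finset β := {y | ∃ x, f x = some y}

theorem card_partialRange {f : α → Option β} (hf : IsPartialInj f) :
    #(partialRange f) = #(partialDomain f) := by
  refine (card_bij (fun x hx => (f x).get (mem_partialDomain.1 hx)) (fun x hx => ?_)
    (fun x hx y hy => hf.get_injective _ _) fun y hy => ?_).symm
  · simp [partialRange]
  · obtain ⟨x, hx⟩ := (mem_filter.1 hy).2
    exact ⟨x, by simp [hx], by simp [hx]⟩

theorem card_partialDomain_le {f : α → Option β} (hf : IsPartialInj f) :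
    #(partialDomain f) ≤ Fintype.card β :=
  card_partialRange hf ▸ card_le_univ _

theorem card_subtype_forall_ne_some {f : α → Option β} (hf : IsPartialInj f) :
    Fintype.card {y // ∀ x, f x ≠ some y} = Fintype.card β - #(partialDomain f) := by
  rw [Fintype.card_subtype, ← card_partialRange hf, ← card_compl, partialRange, compl_filter]
  simp

def partialInjEquivEmbedding [DecidableEq α] (S : Finset α) :
    {f : α → Option β // IsPartialInj f ∧ partialDomain f = S} ≃ (S ↪ β) where
  toFun f := ⟨fun x => (f.1 x).get (by simpa [← f.2.2] using x.2), fun x y hxy =>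
    Subtype.ext <| f.2.1.get_injective _ _ hxy⟩
  invFun g := ⟨fun x => if h : x ∈ S then some (g ⟨x, h⟩) else none, by
    refine ⟨fun x y b hx hy => ?_, ?_⟩
    · simp only [Option.dite_none_right_eq_some, Option.some.injEq] at hx hy
      obtain ⟨_, hx⟩ := hx
      obtain ⟨_, hy⟩ := hy
      exact congrArg Subtype.val (g.injective (hx.trans hy.symm))
    · ext x; by_cases h : x ∈ S <;> simp [h]⟩
  left_inv f := by
    ext x : 2
    by_cases h : x ∈ S
    · simp only [h, dite_true]
      exact Option.some_get _
    · have hx : f.1 x = none := by simpa [← f.2.2] using h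
      simp [h, hx]
  right_inv g := by ext x; simp

theorem card_partialInj [DecidableEq α] (s : ℕ) :
    #{f : α → Option β | IsPartialInj f ∧ #(partialDomain f) = s} =
      (Fintype.card α).choose s * (Fintype.card β).descFactorial s := by
  rw [card_eq_sum_card_fiberwise (f := partialDomain) (t := powersetCard s univ)
    fun f hf => by simpa using (mem_filter.1 hf).2.2]
  rw [sum_congr rfl fun S hS => ?_, sum_const, card_powersetCard, card_univ, smul_eq_mul]
  rw [mem_powersetCard] at hS
  rw [filter_filter, ← Fintype.card_subtype]
  have hiff (f : α → Option β) : (IsPartialInj f ∧ #(partialDomain f) = s) ∧ partialDomain f = S ↔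
      IsPartialInj f ∧ partialDomain f = S := by
    constructor
    · exact fun h => ⟨h.1.1, h.2⟩
    · exact fun h => ⟨⟨h.1, h.2 ▸ hS.2⟩, h.2⟩
  rw [Fintype.card_congr ((Equiv.subtypeEquivRight hiff).trans (partialInjEquivEmbedding S)),
    Fintype.card_embedding_eq, Fintype.card_coe, hS.2]

theorem card_partialInj_pair_eq_fGD [DecidableEq α] (l : ℕ) :
    #{d : (α → Option β) × (β → Option α) | (IsPartialInj d.1 ∧ IsPartialInj d.2) ∧
        #(partialDomain d.1) + #(partialDomain d.2) = l} =
      fGD (Fintype.card α) (Fintype.card β) l := by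
  rw [card_eq_sum_card_fiberwise (f := fun d => #(partialDomain d.1)) (t := range (l + 1))
    fun d hd => mem_coe.2 <| mem_range.2 <| by rw [mem_coe, mem_filter] at hd; dsimp only; omega]
  refine sum_congr rfl fun j hjl => ?_
  have hj : j ≤ l := Nat.lt_succ_iff.1 (mem_range.1 hjl)
  rw [filter_filter]
  have hprod : ({d : (α → Option β) × (β → Option α) | ((IsPartialInj d.1 ∧ IsPartialInj d.2) ∧
        #(partialDomain d.1) + #(partialDomain d.2) = l) ∧ #(partialDomain d.1) = j} : Finset _) =
      ({f : α → Option β | IsPartialInj f ∧ #(partialDomain f) = j} : Finset _) ×ˢ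
        ({g : β → Option α | IsPartialInj g ∧ #(partialDomain g) = l - j} : Finset _) := by
    ext d
    simp only [mem_filter, mem_univ, true_and, mem_product]
    constructor
    · rintro ⟨⟨⟨h₁, h₂⟩, hl⟩, rfl⟩
      exact ⟨⟨h₁, rfl⟩, h₂, by omega⟩
    · rintro ⟨⟨h₁, rfl⟩, h₂, h⟩
      exact ⟨⟨⟨h₁, h₂⟩, by omega⟩, rfl⟩
  rw [hprod, card_product, card_partialInj, card_partialInj,
    Nat.descFactorial_eq_factorial_mul_choose, Nat.descFactorial_eq_factorial_mul_choose]
  ring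

end PartialInj

section Extension

variable {X : Type} {g : X → Option X}

def IsExtension (g : X → Option X) (σ : Equiv.Perm X) : Prop := ∀ ⦃x y⦄, g x = some y → σ x = y

theorem IsExtension.eq_none_iff {σ : Equiv.Perm X} (hσ : IsExtension g σ) (x : X) :
    g x = none ↔ ∀ x', g x' ≠ some (σ x) := by
  refine ⟨fun hx x' hx' => ?_, fun h => Option.eq_none_iff_forall_ne_some.2 fun y hy => ?_⟩
  · rw [σ.injective (hσ hx')] at hx'
    simp [hx] at hx'
  · exact h x (hσ hy ▸ hy)

variable [Fintype X] [DecidableEq X]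

noncomputable def extendPerm (hg : IsPartialInj g)
    (e : {x // g x = none} ≃ {y // ∀ x, g x ≠ some y}) : Equiv.Perm X :=
  Equiv.subtypeCongr hg.domainEquivRange
    ((Equiv.subtypeEquivRight fun x => by simp).trans
      (e.trans (Equiv.subtypeEquivRight fun y => by simp)))

theorem extendPerm_apply_of_eq_some (hg : IsPartialInj g)
    (e : {x // g x = none} ≃ {y // ∀ x, g x ≠ some y}) {x y : X} (hxy : g x = some y) :
    extendPerm hg e x = y := by
  rw [extendPerm, Equiv.subtypeCongr_apply_of_pos _ _ (by simp [hxy]),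
    IsPartialInj.domainEquivRange_apply]
  simp [hxy]

theorem extendPerm_apply_of_eq_none (hg : IsPartialInj g)
    (e : {x // g x = none} ≃ {y // ∀ x, g x ≠ some y}) {x : X} (hx : g x = none) :
    extendPerm hg e x = e ⟨x, hx⟩ := by
  rw [extendPerm, Equiv.subtypeCongr_apply_of_neg _ _ (by simp [hx])]
  rfl

noncomputable def extensionEquiv (hg : IsPartialInj g) :
    {σ : Equiv.Perm X // IsExtension g σ} ≃ ({x // g x = none} ≃ {y // ∀ x, g x ≠ some y}) where
  toFun σ := σ.1.subtypeEquiv σ.2.eq_none_iff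
  invFun e := ⟨extendPerm hg e, fun _ _ => extendPerm_apply_of_eq_some hg e⟩
  left_inv σ := by
    ext x
    cases hx : g x with
    | none => rw [extendPerm_apply_of_eq_none hg _ hx]; rfl
    | some y => rw [extendPerm_apply_of_eq_some hg _ hx, σ.2 hx]
  right_inv e := by
    ext ⟨x, hx⟩
    exact extendPerm_apply_of_eq_none hg e hx

end Extension

section Merge

variable {A B R ι : Type}

-- `A` and `B` are the two sets to be merged; the remaining sets are the colour classes of `c`.
def splitColoring (c : R → ι) : (A ⊕ B) ⊕ R → Option (Option ι) :=
  Sum.elim (Sum.elim (fun _ => none) fun _ => some none) fun r => some (some (c r))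

def mergedColoring {M : Type} (c : R → ι) : M ⊕ R → Option ι :=
  Sum.elim (fun _ => none) fun r => some (c r)

def crossData (σ : Equiv.Perm ((A ⊕ B) ⊕ R)) : (A → Option B) × (B → Option A) :=
  (fun a => (σ (.inl (.inl a))).getLeft?.bind Sum.getRight?,
    fun b => (σ (.inl (.inr b))).getLeft?.bind Sum.getLeft?)

def crossMap (φ : A → Option B) (ψ : B → Option A) : (A ⊕ B) ⊕ R → Option ((A ⊕ B) ⊕ R) :=
  Sum.elim (Sum.elim (fun a => (φ a).map (.inl ∘ .inr)) fun b => (ψ b).map (.inl ∘ .inl))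
    fun _ => none

theorem isPartialInj_crossData (σ : Equiv.Perm ((A ⊕ B) ⊕ R)) :
    IsPartialInj (crossData σ).1 ∧ IsPartialInj (crossData σ).2 := by
  refine ⟨fun x y b hx hy => ?_, fun x y b hx hy => ?_⟩ <;>
    simp only [crossData, Option.bind_eq_some_iff, Sum.getLeft?_eq_some_iff,
      Sum.getRight?_eq_some_iff] at hx hy <;>
    obtain ⟨_, hx, rfl⟩ := hx <;> obtain ⟨_, hy, hy'⟩ := hy <;> subst hy' <;>
    have := σ.injective (hx.trans hy.symm) <;> simpa using this

theorem isPartialInj_crossMap {φ : A → Option B} {ψ : B → Option A} (hφ : IsPartialInj φ)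
    (hψ : IsPartialInj ψ) : IsPartialInj (crossMap (R := R) φ ψ) := by
  rintro ((a | b) | r) ((a' | b') | r') y hx hy <;>
    simp only [crossMap, Sum.elim_inl, Sum.elim_inr, Option.map_eq_some_iff, Function.comp_apply,
      reduceCtorEq] at hx hy <;>
    obtain ⟨_, hx, rfl⟩ := hx <;> obtain ⟨_, hy, hy'⟩ := hy <;> simp at hy'
  · rw [hφ hx (hy' ▸ hy)]
  · rw [hψ hx (hy' ▸ hy)]

variable {φ : A → Option B} {ψ : B → Option A} {c : R → ι} {σ : Equiv.Perm ((A ⊕ B) ⊕ R)}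

-- A point of `A` that `σ` does not send into `B` cannot go to `A` either, so it lands in `R`:
-- away from the cross map only the merged colouring matters.
theorem crossCondition_inl_inl_iff (a : A) (y : (A ⊕ B) ⊕ R) :
    let x : (A ⊕ B) ⊕ R := .inl (.inl a)
    splitColoring c y ≠ splitColoring c x ∧ y.getLeft?.bind Sum.getRight? = φ a ↔
      (∀ y', crossMap φ ψ x = some y' → y = y') ∧
        (crossMap φ ψ x = none → mergedColoring c y ≠ mergedColoring c x) := by
  rcases y with ((_ | _) | _) <;> cases h : φ a <;>
    simp [crossMap, splitColoring, mergedColoring, h, eq_comm]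

theorem crossCondition_inl_inr_iff (b : B) (y : (A ⊕ B) ⊕ R) :
    let x : (A ⊕ B) ⊕ R := .inl (.inr b)
    splitColoring c y ≠ splitColoring c x ∧ y.getLeft?.bind Sum.getLeft? = ψ b ↔
      (∀ y', crossMap φ ψ x = some y' → y = y') ∧
        (crossMap φ ψ x = none → mergedColoring c y ≠ mergedColoring c x) := by
  rcases y with ((_ | _) | _) <;> cases h : ψ b <;>
    simp [crossMap, splitColoring, mergedColoring, h, eq_comm]

theorem crossCondition_inr_iff (r : R) (y : (A ⊕ B) ⊕ R) :
    let x : (A ⊕ B) ⊕ R := .inr r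
    splitColoring c y ≠ splitColoring c x ↔ mergedColoring c y ≠ mergedColoring c x := by
  rcases y with ((_ | _) | _) <;> simp [splitColoring, mergedColoring]

theorem crossData_eq_iff_isExtension :
    (∀ x, splitColoring c (σ x) ≠ splitColoring c x) ∧ crossData σ = (φ, ψ) ↔
      IsExtension (crossMap φ ψ) σ ∧
        ∀ x, crossMap φ ψ x = none → mergedColoring c (σ x) ≠ mergedColoring c x := by
  simp only [Prod.ext_iff, funext_iff, crossData]
  constructor
  · rintro ⟨hder, hφ, hψ⟩
    have hA a := (crossCondition_inl_inl_iff (ψ := ψ) a _).1 ⟨hder _, hφ a⟩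
    have hB b := (crossCondition_inl_inr_iff (φ := φ) b _).1 ⟨hder _, hψ b⟩
    refine ⟨?_, ?_⟩
    · rintro ((a | b) | r) y hy
      exacts [(hA a).1 y hy, (hB b).1 y hy, by simp [crossMap] at hy]
    · rintro ((a | b) | r) hx
      exacts [(hA a).2 hx, (hB b).2 hx, (crossCondition_inr_iff r _).1 (hder _)]
  · rintro ⟨hext, hmerge⟩
    have hA a := (crossCondition_inl_inl_iff a _).2 ⟨@hext (.inl (.inl a)), hmerge _⟩
    have hB b := (crossCondition_inl_inr_iff b _).2 ⟨@hext (.inl (.inr b)), hmerge _⟩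
    refine ⟨?_, fun a => (hA a).2, fun b => (hB b).2⟩
    rintro ((a | b) | r)
    exacts [(hA a).1, (hB b).1, (crossCondition_inr_iff r _).2 (hmerge _ rfl)]

variable [Fintype A] [Fintype B] [Fintype R] [DecidableEq A] [DecidableEq B] [DecidableEq R]
  [DecidableEq ι]

theorem card_fiber_crossData (hφ : IsPartialInj φ) (hψ : IsPartialInj ψ) :
    Fintype.card {σ : Equiv.Perm ((A ⊕ B) ⊕ R) //
        (∀ x, splitColoring c (σ x) ≠ splitColoring c x) ∧ crossData σ = (φ, ψ)} =
      derangementCount (fun x : {x // crossMap φ ψ x = none} => mergedColoring c x.1)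
        (fun y : {y // ∀ x, crossMap φ ψ x ≠ some y} => mergedColoring c y.1) := by
  refine Fintype.card_congr <|
    (Equiv.subtypeEquivRight fun _ => crossData_eq_iff_isExtension).trans <|
      (Equiv.subtypeSubtypeEquivSubtypeInter _ _).symm.trans <|
        (extensionEquiv (isPartialInj_crossMap hφ hψ)).subtypeEquiv fun σ => ?_
  simp [extensionEquiv]

def mergedCount (c : R → ι) (m : ℕ) : ℕ :=
  derangementCount (mergedColoring (M := Fin m) c) (mergedColoring (M := Fin m) c)

theorem derangementCount_subtype_eq_mergedCount {M : Type} [Fintype M] [DecidableEq M]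
    {P Q : M ⊕ R → Prop} [DecidablePred P] [DecidablePred Q] (hP : ∀ r, P (.inr r))
    (hQ : ∀ r, Q (.inr r)) {m : ℕ} (hPm : Fintype.card {x // P (.inl x)} = m)
    (hQm : Fintype.card {x // Q (.inl x)} = m) :
    derangementCount (fun x : {x // P x} => mergedColoring c x.1)
      (fun y : {y // Q y} => mergedColoring c y.1) = mergedCount c m := by
  refine derangementCount_congr_of_equiv
    (Equiv.subtypeSum.trans <| (Fintype.equivFinOfCardEq hPm).sumCongr (.subtypeUnivEquiv hP))
    (Equiv.subtypeSum.trans <| (Fintype.equivFinOfCardEq hQm).sumCongr (.subtypeUnivEquiv hQ))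
    ?_ ?_ <;> rintro ⟨_ | _, _⟩ <;> rfl

theorem card_fiber_crossData_eq_mergedCount (hφ : IsPartialInj φ) (hψ : IsPartialInj ψ) :
    Fintype.card {σ : Equiv.Perm ((A ⊕ B) ⊕ R) //
        (∀ x, splitColoring c (σ x) ≠ splitColoring c x) ∧ crossData σ = (φ, ψ)} =
      mergedCount c
        (Fintype.card A + Fintype.card B - (#(partialDomain φ) + #(partialDomain ψ))) := by
  rw [card_fiber_crossData hφ hψ]
  have hφA : #(partialDomain φ) ≤ Fintype.card A := card_le_univ _
  have hψB : #(partialDomain ψ) ≤ Fintype.card B := card_le_univ _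
  have hφB := card_partialDomain_le hφ
  have hψA := card_partialDomain_le hψ
  refine derangementCount_subtype_eq_mergedCount (fun _ => rfl) (fun _ => by simp [crossMap]) ?_ ?_
  · rw [card_subtype_sum]
    simp only [crossMap, Sum.elim_inl, Sum.elim_inr, Option.map_eq_none_iff, card_subtype_eq_none]
    omega
  · rw [card_subtype_sum]
    simp [crossMap, card_subtype_forall_ne_some hφ, card_subtype_forall_ne_some hψ]
    omega

theorem derangementCount_splitColoring :
    derangementCount (splitColoring (A := A) (B := B) c) (splitColoring (A := A) (B := B) c) =
      ∑ l ∈ range (Fintype.card A + Fintype.card B + 1),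
        fGD (Fintype.card A) (Fintype.card B) l *
          mergedCount c (Fintype.card A + Fintype.card B - l) := by
  rw [derangementCount, Fintype.card_subtype,
    card_eq_sum_card_fiberwise (f := crossData) (t := {d | IsPartialInj d.1 ∧ IsPartialInj d.2})
      fun σ _ => by simpa using isPartialInj_crossData σ]
  have hfiber : ∀ d ∈ ({d | IsPartialInj d.1 ∧ IsPartialInj d.2} :
      Finset ((A → Option B) × (B → Option A))),
      #{σ ∈ {σ : Equiv.Perm ((A ⊕ B) ⊕ R) | ∀ x, splitColoring c (σ x) ≠ splitColoring c x} |
        crossData σ = d} =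
      mergedCount c (Fintype.card A + Fintype.card B -
        (#(partialDomain d.1) + #(partialDomain d.2))) := fun d hd => by
    rw [filter_filter, ← Fintype.card_subtype]
    exact card_fiber_crossData_eq_mergedCount (mem_filter.1 hd).2.1 (mem_filter.1 hd).2.2
  rw [sum_congr rfl hfiber, ← sum_fiberwise_of_maps_to'
    (g := fun d : (A → Option B) × (B → Option A) => #(partialDomain d.1) + #(partialDomain d.2))
    (f := fun l => mergedCount c (Fintype.card A + Fintype.card B - l))
    (t := range (Fintype.card A + Fintype.card B + 1)) fun d _ => mem_range.2 <| by
      have := card_le_univ (partialDomain d.1)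
      have := card_le_univ (partialDomain d.2)
      omega]
  refine sum_congr rfl fun l _ => ?_
  rw [sum_const, smul_eq_mul, filter_filter, card_partialInj_pair_eq_fGD]

end Merge

theorem mergedCount_eq_gdCount (n m : ℕ) (s : Fin n → ℕ) :
    mergedCount (Sigma.fst : (Σ i, Fin (s i)) → Fin n) m = gdCount (n + 1) (Fin.cons m s) := by
  refine derangementCount_congr (finSuccEquiv n).symm ?_ ?_ <;>
  · rintro (_ | i) <;> rw [card_sigma_fst_eq, card_subtype_sum] <;>
      simp [mergedColoring, card_sigma_fst_eq s]

theorem gdCount_eq_derangementCount_splitColoring (n : ℕ) (t : Fin (n + 2) → ℕ) :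
    gdCount (n + 2) t =
      derangementCount
        (splitColoring (A := Fin (t 0)) (B := Fin (t 1))
          (Sigma.fst : (Σ i : Fin n, Fin (t i.succ.succ)) → Fin n))
        (splitColoring (A := Fin (t 0)) (B := Fin (t 1))
          (Sigma.fst : (Σ i : Fin n, Fin (t i.succ.succ)) → Fin n)) := by
  refine derangementCount_congr ((finSuccEquiv (n + 1)).trans (Equiv.optionCongr (finSuccEquiv n)))
    ?_ ?_ <;>
  · refine Fin.cases ?_ (Fin.cases ?_ fun i => ?_) <;>
      simp only [Equiv.trans_apply, finSuccEquiv_zero, finSuccEquiv_succ, Equiv.optionCongr_apply,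
        Option.map_none, Option.map_some] <;>
      rw [card_sigma_fst_eq, card_subtype_sum, card_subtype_sum] <;>
      simp [splitColoring, card_sigma_fst_eq (fun i : Fin n => t i.succ.succ)]

theorem gd_merge_two_sets (n : ℕ) (t : Fin (n + 2) → ℕ) :
    gdCount (n + 2) t =
      ∑ l ∈ Finset.range (t 0 + t 1 + 1),
        fGD (t 0) (t 1) l *
          gdCount (n + 1) (Fin.cons (t 0 + t 1 - l) (fun i : Fin n => t i.succ.succ)) := by
  rw [gdCount_eq_derangementCount_splitColoring, derangementCount_splitColoring]
  simp only [Fintype.card_fin, mergedCount_eq_gdCount]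
end

section
/- The number of generalized derangements with three sets satisfies P(t₁,t₂,t₃) = t₁!·t₂!·t₃!·Σ_{l₁=0}^{t₁+t₂−t₃} C(t₂,l₁)·C(t₃,t₁−l₁)·C(t₁,t₃−t₂+l₁); equivalently, P'(t₁,t₂,t₃) = Σ_{l₁} C(t₂,l₁)·C(t₃,t₁−l₁)·C(t₁,t₃−t₂+l₁). -/
/-- Binomial coefficient with an integer lower index, zero when the index is negative. -/
def chooseZ (a : ℕ) (b : ℤ) : ℕ := if 0 ≤ b then a.choose b.toNat else 0

/-!
Sending each element to the set containing its image turns a generalized derangement into an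
anagram without fixed letters, and two derangements with the same anagram differ by a permutation
preserving every set, so each anagram comes from exactly `t₁! t₂! t₃!` derangements.

With three letters every position has only two admissible letters, so an anagram is a choice of
three subsets: the positions of the second and of the third block carrying the first letter, and
those of the first block carrying the third letter. Once the first subset has size `l₁`, the letter
counts force the other two to have sizes `t₁ - l₁` and `t₃ - t₂ + l₁`.
-/

open Finset Equiv
open scoped Nat

theorem card_perm_comp_eq_of_card_fiber_eq {α ι : Type*} [Fintype α] [DecidableEq α]
    [Fintype ι] [DecidableEq ι] (f w : α → ι)
    (h : ∀ i, Fintype.card {a // w a = i} = Fintype.card {a // f a = i}) :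
    Fintype.card {σ : Perm α // f ∘ σ = w} = ∏ i, (Fintype.card {a // f a = i})! := by
  let σ₀ : Perm α := ofFiberEquiv fun i => Fintype.equivOfCardEq (h i)
  have hσ₀ : f ∘ σ₀ = w := funext (ofFiberEquiv_map _)
  -- right multiplication by `σ₀⁻¹` identifies the solutions with the stabilizer of `f`
  rw [← DomMulAct.stabilizer_card f, ← hσ₀]
  refine Fintype.card_congr (subtypeEquiv (Equiv.mulRight σ₀⁻¹) fun σ => ?_)
  rw [Equiv.coe_mulRight, Perm.coe_mul, Perm.coe_inv, ← Function.comp_assoc,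
    Equiv.comp_symm_eq]

theorem card_subtype_sigma_fst_eq {n : ℕ} (t : Fin n → ℕ) (j : Fin n) :
    Fintype.card {x : Σ i, Fin (t i) // x.1 = j} = t j := by
  simp [Fintype.card_congr (sigmaSubtype j)]

theorem card_filter_perm_fst_eq {n : ℕ} (t : Fin n → ℕ) (σ : Perm (Σ i : Fin n, Fin (t i)))
    (j : Fin n) : #{x | (σ x).1 = j} = t j := by
  rw [← Fintype.card_subtype, ← card_subtype_sigma_fst_eq t j]
  exact Fintype.card_congr (σ.subtypeEquiv fun _ => Iff.rfl)

theorem card_perm_fst_comp_eq {n : ℕ} {t : Fin n → ℕ} (w : (Σ i : Fin n, Fin (t i)) → Fin n)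
    (hw : ∀ j, #{x | w x = j} = t j) :
    Fintype.card {σ : Perm (Σ i : Fin n, Fin (t i)) // Sigma.fst ∘ ⇑σ = w} = ∏ j, (t j)! := by
  rw [card_perm_comp_eq_of_card_fiber_eq]
  · simp only [card_subtype_sigma_fst_eq]
  · intro j
    rw [card_subtype_sigma_fst_eq, Fintype.card_subtype, hw]

theorem gdCount_eq_prod_factorial_mul_aflCount (n : ℕ) (t : Fin n → ℕ) :
    gdCount n t = (∏ j, (t j)!) * aflCount n t := by
  let byWord : {σ : Perm (Σ i : Fin n, Fin (t i)) // ∀ x, (σ x).1 ≠ x.1} ≃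
      Σ w : {w : (Σ i : Fin n, Fin (t i)) → Fin n //
        (∀ j, #{x | w x = j} = t j) ∧ ∀ x, w x ≠ x.1},
        {σ : Perm (Σ i : Fin n, Fin (t i)) // Sigma.fst ∘ ⇑σ = w.1} :=
    { toFun σ := ⟨⟨Sigma.fst ∘ σ.1, card_filter_perm_fst_eq t σ.1, σ.2⟩, σ.1, rfl⟩
      invFun p := ⟨p.2.1, fun x => by simpa [← p.2.2] using p.1.2.2 x⟩
      left_inv _ := rfl
      right_inv := by rintro ⟨⟨w, hw⟩, σ, hσ⟩; dsimp only at hσ; subst hσ; rfl }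
  rw [gdCount, Fintype.card_congr byWord, Fintype.card_sigma,
    sum_congr rfl fun w _ => card_perm_fst_comp_eq w.1 w.2.1, sum_const, Finset.card_univ,
    smul_eq_mul, mul_comm, aflCount]

theorem card_filter_sigma_eq_sum {ι : Type*} [Fintype ι] {α : ι → Type*} [∀ i, Fintype (α i)]
    (p : (Σ i, α i) → Prop) [DecidablePred p] :
    #{x | p x} = ∑ i, #{k : α i | p ⟨i, k⟩} := by
  rw [← univ_sigma_univ, filter_sigma, card_sigma]

theorem card_filter_ite_eq {γ β : Type*} [Fintype γ] [DecidableEq γ] [DecidableEq β]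
    (s : Finset γ) {a b : β} (hab : a ≠ b) (c : β) :
    #{k | (if k ∈ s then a else b) = c} =
      (if a = c then #s else 0) + (if b = c then Fintype.card γ - #s else 0) := by
  by_cases hac : a = c
  · subst hac
    simp [hab.symm]
  · by_cases hbc : b = c
    · subst hbc
      simp [hab, filter_not, card_univ_sdiff]
    · simp [hac, hbc, ite_eq_iff]

section TwoValued

variable {ι β : Type*} {α : ι → Type*} [∀ i, Fintype (α i)] [∀ i, DecidableEq (α i)]
  [DecidableEq β]

def twoValuedSigmaEquiv (a b : ι → β) (hab : ∀ i, a i ≠ b i) :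
    {w : (Σ i, α i) → β // ∀ x, w x = a x.1 ∨ w x = b x.1} ≃ Π i, Finset (α i) where
  toFun w i := {k | w.1 ⟨i, k⟩ = a i}
  invFun S := ⟨fun x => if x.2 ∈ S x.1 then a x.1 else b x.1, fun x => by
    by_cases h : x.2 ∈ S x.1 <;> simp [h]⟩
  left_inv w := by
    ext x
    rcases w.2 x with h | h <;> simp [h, (hab _).symm]
  right_inv S := by
    ext i k
    simp [(hab i).symm]

end TwoValued

theorem chooseZ_natCast (a b : ℕ) : chooseZ a b = a.choose b := by
  simp [chooseZ]

theorem card_filter_card_eq_chooseZ (γ : Type*) [Fintype γ] (b : ℤ) :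
    #{s : Finset γ | (#s : ℤ) = b} = chooseZ (Fintype.card γ) b := by
  unfold chooseZ
  split_ifs with hb
  · rw [← Finset.card_univ, ← card_powersetCard, powersetCard_eq_filter, powerset_univ]
    congr 1
    ext s
    simp only [mem_filter, mem_univ, true_and]
    omega
  · simp only [Finset.card_eq_zero, filter_eq_empty_iff]
    omega

section ThreeLetters

theorem fin_three_ne_iff_eq_or_eq (i c : Fin 3) : c ≠ i ↔ c = ![2, 0, 0] i ∨ c = ![1, 2, 1] i := by
  revert i c; decide

variable (t : Fin 3 → ℕ)

-- `S i` is where block `i` uses letter `![2, 0, 0] i`, so that (indices starting at 0)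
-- `#(S 1)`, `#(S 2)`, `#(S 0)` are the sizes `l₁`, `t₁ - l₁`, `t₃ - t₂ + l₁` of the header.
def noFixedLetterEquiv :
    {w : (Σ i : Fin 3, Fin (t i)) → Fin 3 // ∀ x, w x ≠ x.1} ≃ Π i, Finset (Fin (t i)) :=
  (subtypeEquivRight fun w => forall_congr' fun _ => fin_three_ne_iff_eq_or_eq _ _).trans
    (twoValuedSigmaEquiv ![2, 0, 0] ![1, 2, 1] (by decide))

theorem card_filter_noFixedLetterEquiv_symm (S : Π i, Finset (Fin (t i))) (i c : Fin 3) :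
    #{k | ((noFixedLetterEquiv t).symm S).1 ⟨i, k⟩ = c} =
      (if ![2, 0, 0] i = c then #(S i) else 0) +
        (if ![1, 2, 1] i = c then t i - #(S i) else 0) := by
  have hab : (![2, 0, 0] : Fin 3 → Fin 3) i ≠ ![1, 2, 1] i := by revert i; decide
  have h := card_filter_ite_eq (S i) hab c
  rw [Fintype.card_fin] at h
  exact h

theorem letterCounts_noFixedLetterEquiv_symm_iff (S : Π i, Finset (Fin (t i))) :
    (∀ j, #{x | ((noFixedLetterEquiv t).symm S).1 x = j} = t j) ↔
      #(S 1) + #(S 2) = t 0 ∧ #(S 0) + t 1 = t 2 + #(S 1) := by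
  have hS (i : Fin 3) : #(S i) ≤ t i := (card_le_univ _).trans_eq (Fintype.card_fin _)
  have h0 := hS 0; have h1 := hS 1; have h2 := hS 2
  simp only [Fin.forall_fin_succ, Fin.succ_zero_eq_one, Fin.succ_one_eq_two, IsEmpty.forall_iff,
    card_filter_sigma_eq_sum, Fin.sum_univ_three, card_filter_noFixedLetterEquiv_symm,
    Matrix.cons_val_zero, Matrix.cons_val_one, Matrix.cons_val, Fin.reduceEq, ↓reduceIte,
    add_zero, zero_add, and_true]
  omega

theorem aflCount_three_eq_card_filter :
    aflCount 3 t = #{S : Π i, Finset (Fin (t i)) |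
      #(S 1) + #(S 2) = t 0 ∧ #(S 0) + t 1 = t 2 + #(S 1)} := by
  rw [aflCount, ← Fintype.card_subtype]
  refine Fintype.card_congr <| (subtypeEquivRight fun _ => and_comm).trans <|
    (subtypeSubtypeEquivSubtypeInter _ _).symm.trans <|
      subtypeEquiv (noFixedLetterEquiv t) fun w => ?_
  rw [← letterCounts_noFixedLetterEquiv_symm_iff, Equiv.symm_apply_apply]

theorem card_filter_eq_sum_choose :
    #{S : Π i, Finset (Fin (t i)) | #(S 1) + #(S 2) = t 0 ∧ #(S 0) + t 1 = t 2 + #(S 1)} =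
      ∑ l ∈ range (t 0 + t 1 - t 2 + 1),
        (t 1).choose l * chooseZ (t 2) (t 0 - l) * chooseZ (t 0) (t 2 - t 1 + l) := by
  rw [card_eq_sum_card_fiberwise (f := fun S => #(S 1)) (t := range (t 0 + t 1 - t 2 + 1))]
  · refine sum_congr rfl fun l _ => ?_
    have hfiber : filter (fun S => #(S 1) = l) {S : Π i, Finset (Fin (t i)) |
          #(S 1) + #(S 2) = t 0 ∧ #(S 0) + t 1 = t 2 + #(S 1)} =
        Fintype.piFinset fun i =>
          ({s | (#s : ℤ) = ![(t 2 : ℤ) - t 1 + l, l, (t 0 : ℤ) - l] i} : Finset (Finset _)) := by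
      ext S
      simp only [mem_filter, mem_univ, true_and, Fintype.mem_piFinset, Fin.forall_fin_succ,
        Fin.succ_zero_eq_one, Fin.succ_one_eq_two, IsEmpty.forall_iff, and_true,
        Matrix.cons_val_zero, Matrix.cons_val_one, Matrix.cons_val]
      omega
    rw [hfiber, Fintype.card_piFinset, Fin.prod_univ_three]
    simp only [card_filter_card_eq_chooseZ, Fintype.card_fin]
    simp only [Matrix.cons_val_zero, Matrix.cons_val_one, Matrix.cons_val, chooseZ_natCast]
    ring
  · intro S hS'
    simp only [coe_filter, mem_univ, true_and, Set.mem_ofPred_eq, coe_range, Set.mem_Iio] at hS' ⊢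
    have := (card_le_univ (S 0)).trans_eq (Fintype.card_fin _)
    omega

theorem aflCount_three :
    aflCount 3 t = ∑ l ∈ range (t 0 + t 1 - t 2 + 1),
      (t 1).choose l * chooseZ (t 2) (t 0 - l) * chooseZ (t 0) (t 2 - t 1 + l) :=
  (aflCount_three_eq_card_filter t).trans (card_filter_eq_sum_choose t)

end ThreeLetters

theorem gd_three_sets (t₁ t₂ t₃ : ℕ) :
    gdCount 3 ![t₁, t₂, t₃] =
        Nat.factorial t₁ * Nat.factorial t₂ * Nat.factorial t₃ *
          ∑ l₁ ∈ Finset.range (t₁ + t₂ - t₃ + 1),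
            t₂.choose l₁ * chooseZ t₃ ((t₁ : ℤ) - l₁) * chooseZ t₁ ((t₃ : ℤ) - t₂ + l₁) ∧
      aflCount 3 ![t₁, t₂, t₃] =
        ∑ l₁ ∈ Finset.range (t₁ + t₂ - t₃ + 1),
          t₂.choose l₁ * chooseZ t₃ ((t₁ : ℤ) - l₁) * chooseZ t₁ ((t₃ : ℤ) - t₂ + l₁) := by
  have hafl := aflCount_three ![t₁, t₂, t₃]
  refine ⟨?_, hafl⟩
  rw [gdCount_eq_prod_factorial_mul_aflCount, hafl, Fin.prod_univ_three]
  rfl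
end

section
/- Define f(t₁,t₂,l) = Σ_{l₁=0}^{l} C(t₁,l₁)C(t₂,l₁)l₁!·C(t₁,l−l₁)C(t₂,l−l₁)(l−l₁)!. If t₁ ≥ t₂ ≥ 1, then f(t₁,t₂,l) ≥ f(t₁+1,t₂−1,l) for every l ≥ 0. -/
open Finset Nat

/-- The number of `a`-edge matchings in the complete bipartite graph `K_{s,t}`. -/
def matchingCount (s t a : ℕ) : ℕ :=
  s.choose a * t.choose a * a !

lemma fGD_eq_sum_matchingCount (t₁ t₂ l : ℕ) :
    fGD t₁ t₂ l =
      ∑ a ∈ range (l + 1), matchingCount t₁ t₂ a * matchingCount t₁ t₂ (l - a) := by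
  unfold fGD matchingCount
  refine sum_congr rfl fun a _ => ?_
  ring

lemma succ_mul_sub_le_sub_mul_succ {m n a : ℕ} (hnm : n ≤ m) (ha : a ≤ n) :
    (m + 1) * (n + 1 - a) ≤ (m + 1 - a) * (n + 1) := by
  zify [ha.trans (le_succ n), ha.trans (hnm.trans (le_succ m))]
  nlinarith

lemma choose_succ_mul_choose_le {m n : ℕ} (hnm : n ≤ m) (a : ℕ) :
    (m + 1).choose a * n.choose a ≤ m.choose a * (n + 1).choose a := by
  rcases le_or_gt a n with ha | ha
  · have hpos : 0 < (m + 1 - a) * (n + 1) :=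
      Nat.mul_pos (by omega) (succ_pos n)
    refine Nat.le_of_mul_le_mul_right ?_ hpos
    calc (m + 1).choose a * n.choose a * ((m + 1 - a) * (n + 1))
        = ((m + 1).choose a * (m + 1 - a)) * (n.choose a * (n + 1)) := by ring
      _ = (m.choose a * (m + 1)) * ((n + 1).choose a * (n + 1 - a)) := by
          rw [choose_mul_succ_eq, choose_mul_succ_eq]
      _ = m.choose a * (n + 1).choose a * ((m + 1) * (n + 1 - a)) := by ring
      _ ≤ m.choose a * (n + 1).choose a * ((m + 1 - a) * (n + 1)) :=
          Nat.mul_le_mul_left _ (succ_mul_sub_le_sub_mul_succ hnm ha)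
  · simp [choose_eq_zero_of_lt ha]

lemma matchingCount_succ_le {m n : ℕ} (hnm : n ≤ m) (a : ℕ) :
    matchingCount (m + 1) n a ≤ matchingCount m (n + 1) a :=
  Nat.mul_le_mul_right _ (choose_succ_mul_choose_le hnm a)

theorem f_antitone (t₁ t₂ l : ℕ) (h₁ : t₂ ≤ t₁) (h₂ : 1 ≤ t₂) :
    fGD (t₁ + 1) (t₂ - 1) l ≤ fGD t₁ t₂ l := by
  obtain ⟨n, rfl⟩ : ∃ n, t₂ = n + 1 := ⟨t₂ - 1, by omega⟩
  have hn : n ≤ t₁ := by omega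
  rw [Nat.add_sub_cancel, fGD_eq_sum_matchingCount, fGD_eq_sum_matchingCount]
  exact sum_le_sum fun a _ =>
    Nat.mul_le_mul (matchingCount_succ_le hn a) (matchingCount_succ_le hn (l - a))
end

section
/- If t₁ ≥ t₂ ≥ 1, then P(t₁,t₂,t₃,…,tₙ) ≥ P(t₁+1,t₂−1,t₃,…,tₙ). -/
/-!
Write `N(A, B)` for the number of bijections between multisets `A` and `B` (elements counted
with multiplicity) that send no element to an equal one, so that `P(t)` is `N(A, A)` for the
multiset `A` containing `t i` copies of `i`. Sending the distinguished element `v` of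
`v ::ₘ C` to each possible image gives
`N(v ::ₘ C, B) + (count v B) * N(C, B - v) = ∑ y ∈ B, N(C, B - y)`, whose right side does not
depend on `v`. Hence `N(a ::ₘ C, B) ≤ N(b ::ₘ C, B)` once `count b B ≤ count a B` and
`N(C, B - b) ≤ N(C, B - a)`. By the symmetry of `N` and a second use of the same step, this last
inequality reduces to the original one for `(C - a - b, B - a - b)`, so induction proves it
whenever `count b C < count a C`. The theorem follows by turning a `1` into a `0` first in the
domain and then in the codomain.
-/

open Finset

namespace GenDerangement

variable {α : Type*}

noncomputable def numAvoiding {X Y : Type*} (f : X → α) (g : Y → α) : ℕ :=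
  Nat.card {σ : X ≃ Y // ∀ x, g (σ x) ≠ f x}

section Labelled

variable {X X' Y : Type*}

theorem numAvoiding_comm (f : X → α) (g : Y → α) : numAvoiding f g = numAvoiding g f :=
  Nat.card_congr <| (Equiv.symmEquiv X Y).subtypeEquiv fun σ => by
    show (∀ x, g (σ x) ≠ f x) ↔ ∀ y, f (σ.symm y) ≠ g y
    exact ⟨fun h y => by simpa using (h (σ.symm y)).symm,
      fun h x => by simpa using (h (σ x)).symm⟩

theorem numAvoiding_congr_left (e : X ≃ X') {f : X → α} {f' : X' → α} (he : ∀ x, f' (e x) = f x)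
    (g : Y → α) : numAvoiding f g = numAvoiding f' g :=
  Nat.card_congr <| (e.equivCongr (Equiv.refl Y)).subtypeEquiv fun σ => by
    rw [e.forall_congr_left]
    simp [← he]

theorem card_subtype_eq_count_map_univ [Fintype X] [DecidableEq α] (f : X → α) (a : α) :
    Fintype.card {x // f x = a} = (univ.val.map f).count a := by
  rw [Multiset.count_map, Fintype.card_subtype]
  simp_rw [eq_comm (a := a)]
  rfl

theorem exists_equiv_of_map_univ_eq [Fintype X] [Fintype X'] [DecidableEq α]
    {f : X → α} {f' : X' → α} (h : univ.val.map f = univ.val.map f') :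
    ∃ e : X ≃ X', ∀ x, f' (e x) = f x :=
  ⟨Equiv.ofFiberEquiv fun a => Fintype.equivOfCardEq <| by
    rw [card_subtype_eq_count_map_univ, card_subtype_eq_count_map_univ, h],
    Equiv.ofFiberEquiv_map _⟩

theorem numAvoiding_eq_of_map_univ_eq {Y' : Type*} [Fintype X] [Fintype X'] [Fintype Y]
    [Fintype Y'] [DecidableEq α] {f : X → α} {f' : X' → α} {g : Y → α} {g' : Y' → α}
    (hf : univ.val.map f = univ.val.map f') (hg : univ.val.map g = univ.val.map g') :
    numAvoiding f g = numAvoiding f' g' := by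
  obtain ⟨e, he⟩ := exists_equiv_of_map_univ_eq hf
  obtain ⟨e', he'⟩ := exists_equiv_of_map_univ_eq hg
  rw [numAvoiding_congr_left e he, numAvoiding_comm, numAvoiding_congr_left e' he',
    numAvoiding_comm]

theorem map_univ_subtype_ne [Fintype Y] [DecidableEq Y] [DecidableEq α] (g : Y → α) (q : Y) :
    univ.val.map (fun y : {y // y ≠ q} => g y) = (univ.val.map g).erase (g q) := by
  rw [← Multiset.map_erase_of_mem _ _ (mem_univ q), ← erase_val, ← filter_ne',
    ← univ_val_map_subtype_restrict]
  rfl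

theorem card_fiber_numAvoiding_option [DecidableEq Y] {v : α} {f : X → α} {g : Y → α} {q : Y}
    (hq : g q ≠ v) :
    Nat.card {s : {σ : Option X ≃ Y // ∀ o, g (σ o) ≠ o.elim v f} // s.1 none = q} =
      numAvoiding f (fun y : {y // y ≠ q} => g y) :=
  Nat.card_congr
    { toFun s := ⟨Equiv.optionSubtype q ⟨s.1.1, s.2⟩, fun x => s.1.2 (some x)⟩
      invFun τ := ⟨⟨(Equiv.optionSubtype q).symm τ.1, fun o => by
        cases o with
        | none => simpa using hq
        | some x => simpa using τ.2 x⟩, rfl⟩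
      left_inv s := by ext o; cases o <;> simp [s.2]
      right_inv τ := by ext; simp }

theorem numAvoiding_option [Finite X] [Fintype Y] [DecidableEq Y] [DecidableEq α] (v : α)
    (f : X → α) (g : Y → α) :
    numAvoiding (fun o : Option X => o.elim v f) g =
      ∑ q ∈ univ.filter (fun q => g q ≠ v), numAvoiding f (fun y : {y // y ≠ q} => g y) := by
  have hfiber (q : Y) :
      Nat.card {s : {σ : Option X ≃ Y // ∀ o, g (σ o) ≠ o.elim v f} // s.1 none = q} =
        if g q ≠ v then numAvoiding f (fun y : {y // y ≠ q} => g y) else 0 := by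
    split_ifs with hq
    · exact card_fiber_numAvoiding_option hq
    · refine Nat.card_eq_zero.mpr (Or.inl ⟨fun s => ?_⟩)
      exact s.1.2 none (by simpa [s.2] using hq)
  rw [sum_filter, ← Finset.sum_congr rfl (fun q _ => hfiber q), ← Nat.card_sigma]
  exact Nat.card_congr (Equiv.sigmaFiberEquiv _).symm

end Labelled

theorem exists_eq_cons_cons_of_mem {a b : α} {B : Multiset α} (hab : a ≠ b) (ha : a ∈ B)
    (hb : b ∈ B) : ∃ E, B = a ::ₘ b ::ₘ E := by
  obtain ⟨E', rfl⟩ := Multiset.exists_cons_of_mem ha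
  obtain ⟨E, rfl⟩ := Multiset.exists_cons_of_mem ((Multiset.mem_cons.mp hb).resolve_left hab.symm)
  exact ⟨E, rfl⟩

section Multiset

variable [DecidableEq α]

noncomputable def numAvoidingMultiset (A B : Multiset α) : ℕ :=
  numAvoiding (fun x : A => (x : α)) (fun y : B => (y : α))

theorem numAvoiding_eq_numAvoidingMultiset {X Y : Type*} [Fintype X] [Fintype Y]
    (f : X → α) (g : Y → α) :
    numAvoiding f g = numAvoidingMultiset (univ.val.map f) (univ.val.map g) :=
  numAvoiding_eq_of_map_univ_eq (Multiset.map_univ_coe _).symm (Multiset.map_univ_coe _).symm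

theorem numAvoidingMultiset_comm (A B : Multiset α) :
    numAvoidingMultiset A B = numAvoidingMultiset B A :=
  numAvoiding_comm _ _

theorem sum_map_eq_sum_filter_ne_add {M : Type*} [AddCommMonoid M] (B : Multiset α) (φ : α → M)
    (v : α) :
    (B.map φ).sum = ∑ q ∈ univ.filter (fun q : B => (q : α) ≠ v), φ q + B.count v • φ v := by
  classical
  rw [← Multiset.map_univ, ← sum_eq_multiset_sum,
    ← sum_filter_not_add_sum_filter _ (fun q : B => (q : α) = v)]
  congr 1
  rw [sum_congr rfl fun q hq => congrArg φ (mem_filter.mp hq).2, sum_const,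
    ← Fintype.card_subtype, card_subtype_eq_count_map_univ, Multiset.map_univ_coe]

theorem numAvoidingMultiset_cons_add (v : α) (C B : Multiset α) :
    numAvoidingMultiset (v ::ₘ C) B + B.count v * numAvoidingMultiset C (B.erase v) =
      (B.map fun y => numAvoidingMultiset C (B.erase y)).sum := by
  classical
  have hcons : numAvoidingMultiset (v ::ₘ C) B =
      numAvoiding (fun o : Option C => o.elim v fun x : C => (x : α)) (fun y : B => (y : α)) :=
    (numAvoiding_congr_left Multiset.consEquiv.symm (fun o => by cases o <;> rfl) _).symm
  rw [hcons, numAvoiding_option, sum_map_eq_sum_filter_ne_add B _ v, smul_eq_mul]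
  congr 2 with q
  rw [numAvoiding_eq_numAvoidingMultiset, Multiset.map_univ_coe,
    map_univ_subtype_ne (fun y : B => (y : α)) q, Multiset.map_univ_coe]

theorem numAvoidingMultiset_cons_le_cons_of {a b : α} {C B : Multiset α}
    (hB : B.count b ≤ B.count a)
    (hC : b ∈ B → numAvoidingMultiset C (B.erase b) ≤ numAvoidingMultiset C (B.erase a)) :
    numAvoidingMultiset (a ::ₘ C) B ≤ numAvoidingMultiset (b ::ₘ C) B := by
  have ha := numAvoidingMultiset_cons_add a C B
  have hb := numAvoidingMultiset_cons_add b C B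
  have : B.count b * numAvoidingMultiset C (B.erase b) ≤
      B.count a * numAvoidingMultiset C (B.erase a) := by
    by_cases hbB : b ∈ B
    · exact Nat.mul_le_mul hB (hC hbB)
    · simp [Multiset.count_eq_zero.mpr hbB]
  omega

theorem numAvoidingMultiset_cons_le_cons {a b : α} {C B : Multiset α}
    (hC : C.count b < C.count a) (hB : B.count b ≤ B.count a) :
    numAvoidingMultiset (a ::ₘ C) B ≤ numAvoidingMultiset (b ::ₘ C) B := by
  have hab : a ≠ b := by rintro rfl; exact lt_irrefl _ hC
  refine numAvoidingMultiset_cons_le_cons_of hB fun hbB => ?_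
  obtain ⟨E, rfl⟩ := exists_eq_cons_cons_of_mem hab
    (Multiset.count_pos.mp ((Multiset.count_pos.mpr hbB).trans_le hB)) hbB
  simp only [Multiset.erase_cons_head, Multiset.erase_cons_tail _ hab]
  rw [numAvoidingMultiset_comm, numAvoidingMultiset_comm C]
  refine numAvoidingMultiset_cons_le_cons_of hC.le fun hbC => ?_
  obtain ⟨C', rfl⟩ := exists_eq_cons_cons_of_mem hab
    (Multiset.count_pos.mp ((Multiset.count_pos.mpr hbC).trans hC)) hbC
  simp only [Multiset.erase_cons_head, Multiset.erase_cons_tail _ hab]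
  rw [numAvoidingMultiset_comm, numAvoidingMultiset_comm E]
  exact numAvoidingMultiset_cons_le_cons (by simpa [hab, hab.symm] using hC)
    (by simpa [hab, hab.symm] using hB)
termination_by Multiset.card C
decreasing_by subst_vars; simp

end Multiset

theorem gdCount_eq_numAvoidingMultiset {k : ℕ} {s : Fin k → ℕ} {A : Multiset (Fin k)}
    (hA : ∀ j, A.count j = s j) : gdCount k s = numAvoidingMultiset A A := by
  have hlabels : univ.val.map (Sigma.fst : (Σ i, Fin (s i)) → Fin k) = A := by
    ext j
    rw [hA, ← card_subtype_eq_count_map_univ, Fintype.card_congr (Equiv.sigmaSubtype j),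
      Fintype.card_fin]
  rw [← hlabels, ← numAvoiding_eq_numAvoidingMultiset, numAvoiding, Nat.card_eq_fintype_card]
  rfl

end GenDerangement

open GenDerangement in
theorem gd_transfer (n : ℕ) (t : Fin (n + 2) → ℕ) (h₁ : t 1 ≤ t 0) (h₂ : 1 ≤ t 1) :
    gdCount (n + 2) (Function.update (Function.update t 0 (t 0 + 1)) 1 (t 1 - 1)) ≤
      gdCount (n + 2) t := by
  set C := Finsupp.toMultiset (Finsupp.equivFunOnFinite.symm (Function.update t 1 (t 1 - 1)))
  have hC (j) : C.count j = Function.update t 1 (t 1 - 1) j := by simp [C]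
  have hC₀ : C.count 0 = t 0 := by simp [hC]
  have hC₁ : C.count 1 = t 1 - 1 := by simp [hC]
  rw [gdCount_eq_numAvoidingMultiset (A := 0 ::ₘ C) fun j => ?_,
    gdCount_eq_numAvoidingMultiset (A := 1 ::ₘ C) fun j => ?_]
  · have hC₁₀ : C.count 1 < C.count 0 := by omega
    calc numAvoidingMultiset (0 ::ₘ C) (0 ::ₘ C)
        ≤ numAvoidingMultiset (1 ::ₘ C) (0 ::ₘ C) :=
          numAvoidingMultiset_cons_le_cons hC₁₀ (by
            rw [Multiset.count_cons_self, Multiset.count_cons_of_ne one_ne_zero]; omega)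
      _ = numAvoidingMultiset (0 ::ₘ C) (1 ::ₘ C) := numAvoidingMultiset_comm _ _
      _ ≤ numAvoidingMultiset (1 ::ₘ C) (1 ::ₘ C) :=
          numAvoidingMultiset_cons_le_cons hC₁₀ (by
            rw [Multiset.count_cons_self, Multiset.count_cons_of_ne zero_ne_one]; omega)
  · rw [Multiset.count_cons, hC]
    rcases eq_or_ne j 1 with rfl | hj
    · rw [Function.update_self, if_pos rfl]; omega
    · simp [hj]
  · rw [Multiset.count_cons, hC]
    by_cases hj₁ : j = 1 <;> by_cases hj₀ : j = 0 <;> simp_all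
end

section
/- For every m ≥ 1, the maximal value of P(t₁,…,tₙ) over all choices of n and of nonnegative integers t₁,…,tₙ with t₁ + ⋯ + tₙ = m is d(m), the number of derangements of m elements, achieved when all tᵢ = 1. -/
section BlockDerangements

variable {α β : Type*} [Fintype α] [DecidableEq α]

theorem card_perm_moving_blocks_le (f : α → β)
    [Fintype {σ : Equiv.Perm α // ∀ x, f (σ x) ≠ f x}] :
    Fintype.card {σ : Equiv.Perm α // ∀ x, f (σ x) ≠ f x} ≤ numDerangements (Fintype.card α) :=
  card_derangements_eq_numDerangements α ▸ Fintype.card_le_of_embedding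
    (Subtype.impEmbedding _ _ fun _ hσ x hx => hσ x (congrArg f hx))

theorem card_perm_moving_blocks_of_injective {f : α → β} (hf : f.Injective)
    [Fintype {σ : Equiv.Perm α // ∀ x, f (σ x) ≠ f x}] :
    Fintype.card {σ : Equiv.Perm α // ∀ x, f (σ x) ≠ f x} = numDerangements (Fintype.card α) :=
  card_derangements_eq_numDerangements α ▸
    Fintype.card_congr (Equiv.subtypeEquivRight fun _ => forall_congr' fun _ => hf.ne_iff)

end BlockDerangements

theorem gd_max_is_derangements_general (m : ℕ) :
    gdCount m (fun _ => 1) = numDerangements m ∧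
      ∀ (n : ℕ) (t : Fin n → ℕ), (∑ i, t i) = m → gdCount n t ≤ numDerangements m := by
  constructor
  · have fst_injective : (Sigma.fst : (Σ _ : Fin m, Fin 1) → Fin m).Injective :=
      fun x y h => Sigma.ext h (Subsingleton.helim rfl _ _)
    simpa [gdCount] using card_perm_moving_blocks_of_injective fst_injective
  · rintro n t rfl
    simpa [gdCount] using card_perm_moving_blocks_le (Sigma.fst : (Σ i : Fin n, Fin (t i)) → Fin n)

theorem gd_max_is_derangements (m : ℕ) (hm : 1 ≤ m) :
    gdCount m (fun _ => 1) = numDerangements m ∧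
      ∀ (n : ℕ) (t : Fin n → ℕ), (∑ i, t i) = m → gdCount n t ≤ numDerangements m :=
  gd_max_is_derangements_general m
end

section
/- If positive integers b₁,…,bₙ satisfy 2·bₖ ≤ b₁ + ⋯ + bₙ for every k, then P(t₁,…,tₙ) ≤ P(t₁+b₁, t₂+b₂, …, tₙ+bₙ). -/
namespace Equiv.Perm

variable {ι X Y : Type*}

def IsBlockDerangement (f : X → ι) (σ : Perm X) : Prop :=
  ∀ x, f (σ x) ≠ f x

theorem IsBlockDerangement.sumCongr {f : X → ι} {g : Y → ι} {σ : Perm X} {τ : Perm Y}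
    (hσ : IsBlockDerangement f σ) (hτ : IsBlockDerangement g τ) :
    IsBlockDerangement (Sum.elim f g) (σ.sumCongr τ) := by
  rintro (x | y)
  · exact hσ x
  · exact hτ y

theorem isBlockDerangement_permCongr_iff {f : X → ι} {g : Y → ι} (e : X ≃ Y)
    (hfg : ∀ x, g (e x) = f x) (σ : Perm X) :
    IsBlockDerangement g (e.permCongr σ) ↔ IsBlockDerangement f σ := by
  simp only [IsBlockDerangement, permCongr_apply, hfg]
  exact e.symm.forall_congr fun {y} => by rw [← hfg (e.symm y), e.apply_symm_apply]

theorem card_isBlockDerangement_congr {f : X → ι} {g : Y → ι} (e : X ≃ Y)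
    (hfg : ∀ x, g (e x) = f x) :
    Nat.card {σ // IsBlockDerangement f σ} = Nat.card {σ // IsBlockDerangement g σ} :=
  Nat.card_congr <| (permCongr e).subtypeEquiv fun σ =>
    (isBlockDerangement_permCongr_iff e hfg σ).symm

theorem card_isBlockDerangement_le_sum [Finite X] [Finite Y] {f : X → ι} {g : Y → ι}
    {τ : Perm Y} (hτ : IsBlockDerangement g τ) :
    Nat.card {σ // IsBlockDerangement f σ} ≤
      Nat.card {σ // IsBlockDerangement (Sum.elim f g) σ} := by
  refine Nat.card_le_card_of_injective (fun σ => ⟨σ.1.sumCongr τ, σ.2.sumCongr hτ⟩) ?_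
  rintro ⟨σ, _⟩ ⟨σ', _⟩ h
  have : (σ, τ) = (σ', τ) := sumCongrHom_injective (congrArg Subtype.val h)
  exact Subtype.ext (congrArg Prod.fst this)

end Equiv.Perm

open Equiv Perm

theorem Nat.add_half_mod_notMem_Ico {N a b p : ℕ} (hb : 2 * b ≤ N) (hpN : p < N)
    (hp : p ∈ Finset.Ico a (a + b)) : (p + N / 2) % N ∉ Finset.Ico a (a + b) := by
  simp only [Finset.mem_Ico] at hp ⊢
  rcases Nat.lt_or_ge (p + N / 2) N with h | h
  · rw [Nat.mod_eq_of_lt h]; omega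
  · rw [Nat.mod_eq_sub_mod h, Nat.mod_eq_of_lt (by omega)]; omega

theorem exists_isBlockDerangement_sigma_fin {n : ℕ} (b : Fin n → ℕ)
    (h : ∀ k, 2 * b k ≤ ∑ i, b i) :
    ∃ τ : Perm (Σ i : Fin n, Fin (b i)), IsBlockDerangement Sigma.fst τ := by
  set N := ∑ i, b i
  rcases Nat.eq_zero_or_pos N with hN | hN
  · have : IsEmpty (Σ i : Fin n, Fin (b i)) := by
      rw [← Fintype.card_eq_zero_iff, Fintype.card_sigma]
      simpa only [Fintype.card_fin] using hN
    exact ⟨1, isEmptyElim⟩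
  have : NeZero N := ⟨hN.ne'⟩
  refine ⟨finSigmaFinEquiv.symm.permCongr (Equiv.addRight ⟨N / 2, by omega⟩), ?_⟩
  intro x hx
  set y := finSigmaFinEquiv.symm.permCongr (Equiv.addRight ⟨N / 2, by omega⟩) x
  have hy : (finSigmaFinEquiv y : ℕ) = ((finSigmaFinEquiv x : ℕ) + N / 2) % N := by
    simp only [y, permCongr_apply, symm_symm, apply_symm_apply, coe_addRight, Fin.val_add]
    rfl
  have hblock (z : Σ i : Fin n, Fin (b i)) : (finSigmaFinEquiv z : ℕ) ∈
      Finset.Ico (∑ k : Fin z.1, b (Fin.castLE z.1.2.le k))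
        (∑ k : Fin z.1, b (Fin.castLE z.1.2.le k) + b z.1) := by
    rw [finSigmaFinEquiv_apply, Finset.mem_Ico]
    exact ⟨Nat.le_add_right _ _, Nat.add_lt_add_left z.2.2 _⟩
  have hyblock := hblock y
  rw [hx, hy] at hyblock
  exact Nat.add_half_mod_notMem_Ico (h x.1) (finSigmaFinEquiv x).2 (hblock x) hyblock

theorem gd_add_polygon_general (n : ℕ) (t b : Fin n → ℕ)
    (h : ∀ k, 2 * b k ≤ ∑ i, b i) :
    gdCount n t ≤ gdCount n (fun i => t i + b i) := by
  obtain ⟨τ, hτ⟩ := exists_isBlockDerangement_sigma_fin b h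
  let e : (Σ i, Fin (t i + b i)) ≃ (Σ i, Fin (t i)) ⊕ (Σ i, Fin (b i)) :=
    (sigmaCongrRight fun _ => finSumFinEquiv.symm).trans (sigmaSumDistrib _ _)
  have he (x : Σ i, Fin (t i + b i)) : Sum.elim Sigma.fst Sigma.fst (e x) = x.1 := by
    obtain ⟨i, a⟩ := x
    rcases finSumFinEquiv.surjective a with ⟨c | c, rfl⟩ <;> simp [e]
  simp only [gdCount, ← Nat.card_eq_fintype_card]
  calc Nat.card {σ // IsBlockDerangement Sigma.fst σ}
      ≤ Nat.card {σ // IsBlockDerangement (Sum.elim Sigma.fst Sigma.fst) σ} :=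
        card_isBlockDerangement_le_sum hτ
    _ = Nat.card {σ // IsBlockDerangement Sigma.fst σ} :=
        (card_isBlockDerangement_congr e he).symm

theorem gd_add_polygon (n : ℕ) (t b : Fin n → ℕ) (hb : ∀ k, 0 < b k)
    (h : ∀ k, 2 * b k ≤ ∑ i, b i) :
    gdCount n t ≤ gdCount n (fun i => t i + b i) :=
  gd_add_polygon_general n t b h
end

section
/- If there exists an index i ≥ 2 with tᵢ > t₁, then P(t₁+1, t₂, …, tₙ) ≥ P(t₁, t₂, …, tₙ). -/
/-!
A generalized derangement `σ` of the old sets cannot map all of the `i`-th set into the smaller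
`0`-th set, so some `z` outside the `0`-th set has `σ z` outside it too. Inserting the new
element of the `0`-th set into the cycle of `σ` between `z` and `σ z` gives a generalized
derangement of the enlarged sets, and deleting that element again recovers `σ`, so this
insertion is injective.
-/

open Equiv

variable {α β ι : Type*}

def IsColorDerangement (c : α → ι) (σ : Perm α) : Prop :=
  ∀ x, c (σ x) ≠ c x

lemma exists_color_ne_of_card_fiber_lt [Finite α] {c : α → ι} {j k : ι}
    (hjk : Nat.card {x // c x = k} < Nat.card {x // c x = j}) (σ : Perm α) :
    ∃ z, c z ≠ k ∧ c (σ z) ≠ k := by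
  have hj : j ≠ k := by rintro rfl; exact hjk.false
  by_contra! hσ
  have hmaps : ∀ x : {x // c x = j}, c (σ x) = k := fun x => hσ x (by rw [x.2]; exact hj)
  refine hjk.not_ge (Nat.card_le_card_of_injective (fun x => ⟨σ x, hmaps x⟩) ?_)
  intro x y hxy
  exact Subtype.ext (σ.injective (congrArg Subtype.val hxy))

-- `decomposeOption.symm (some (σ z), σ)` is `σ` with the new point `none` inserted between
-- `z` and `σ z`.
lemma isColorDerangement_decomposeOption_symm [DecidableEq α] {c : α → ι} {k : ι}
    {σ : Perm α} (hσ : IsColorDerangement c σ) {z : α} (hz : c z ≠ k)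
    (hσz : c (σ z) ≠ k) :
    IsColorDerangement (fun o => o.elim k c) (Perm.decomposeOption.symm (some (σ z), σ)) := by
  rintro (_ | x)
  · simpa using hσz
  · by_cases hx : x = z
    · subst hx
      simpa using hz.symm
    · have hne : some (σ x) ≠ some (σ z) := by simpa using hx
      simp only [Perm.decomposeOption_symm_apply, Perm.coe_mul, Function.comp_apply,
        optionCongr_apply, Option.map_some, swap_apply_of_ne_of_ne (Option.some_ne_none _) hne]
      exact hσ x

lemma card_isColorDerangement_le_option [Finite α] {c : α → ι} {j k : ι}
    (hjk : Nat.card {x // c x = k} < Nat.card {x // c x = j}) :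
    Nat.card {σ : Perm α // IsColorDerangement c σ} ≤
      Nat.card {π : Perm (Option α) // IsColorDerangement (fun o => o.elim k c) π} := by
  classical
  choose z hz hσz using exists_color_ne_of_card_fiber_lt hjk
  refine Nat.card_le_card_of_injective
    (fun σ => ⟨_, isColorDerangement_decomposeOption_symm σ.2 (hz σ) (hσz σ)⟩) ?_
  intro σ τ hστ
  have := Perm.decomposeOption.symm.injective (congrArg Subtype.val hστ)
  exact Subtype.ext (Prod.ext_iff.1 this).2

lemma card_isColorDerangement_congr {cα : α → ι} {cβ : β → ι} (e : α ≃ β)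
    (he : ∀ a, cβ (e a) = cα a) :
    Nat.card {σ : Perm α // IsColorDerangement cα σ} =
      Nat.card {σ : Perm β // IsColorDerangement cβ σ} := by
  refine Nat.card_congr (e.permCongr.subtypeEquiv fun σ => ?_)
  simp only [IsColorDerangement, ← e.forall_congr_right, permCongr_apply, symm_apply_apply, he]

lemma card_isColorDerangement_congr_of_card_fiber [Finite α] [Finite β]
    {cα : α → ι} {cβ : β → ι}
    (h : ∀ i, Nat.card {a // cα a = i} = Nat.card {b // cβ b = i}) :
    Nat.card {σ : Perm α // IsColorDerangement cα σ} =
      Nat.card {σ : Perm β // IsColorDerangement cβ σ} :=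
  card_isColorDerangement_congr
    (ofFiberEquiv fun i => (Finite.card_eq.1 (h i)).some) (ofFiberEquiv_map _)

lemma card_option_elim_fiber [Finite α] [DecidableEq ι] (c : α → ι) (k i : ι) :
    Nat.card {o : Option α // o.elim k c = i} =
      Nat.card {a // c a = i} + if k = i then 1 else 0 := by
  have := Fintype.ofFinite α
  simp only [Nat.card_eq_fintype_card, Fintype.card_subtype, Finset.card_filter,
    Fintype.sum_option, Option.elim_none, Option.elim_some]
  exact add_comm _ _

lemma card_sigma_fiber {m : ℕ} (t : Fin m → ℕ) (i : Fin m) :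
    Nat.card {x : Σ i, Fin (t i) // x.1 = i} = t i := by
  rw [Nat.card_congr (sigmaSubtype i), Nat.card_eq_fintype_card, Fintype.card_fin]

lemma gdCount_eq_card_isColorDerangement (m : ℕ) (t : Fin m → ℕ) :
    gdCount m t = Nat.card {σ : Perm (Σ i, Fin (t i)) // IsColorDerangement Sigma.fst σ} := by
  rw [gdCount, ← Nat.card_eq_fintype_card]; rfl

theorem gd_increase_small (n : ℕ) (t : Fin (n + 1) → ℕ) (h : ∃ i, i ≠ 0 ∧ t 0 < t i) :
    gdCount (n + 1) t ≤ gdCount (n + 1) (Function.update t 0 (t 0 + 1)) := by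
  obtain ⟨i, -, hi⟩ := h
  have hfiber :
      Nat.card {x : Σ i, Fin (t i) // x.1 = 0} < Nat.card {x : Σ i, Fin (t i) // x.1 = i} := by
    rwa [card_sigma_fiber, card_sigma_fiber]
  rw [gdCount_eq_card_isColorDerangement, gdCount_eq_card_isColorDerangement]
  refine (card_isColorDerangement_le_option hfiber).trans_eq
    (card_isColorDerangement_congr_of_card_fiber fun j => ?_)
  rw [card_option_elim_fiber, card_sigma_fiber, card_sigma_fiber]
  rcases eq_or_ne j 0 with rfl | hj
  · simp
  · simp [hj, hj.symm]
end

section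
/- P'(t₁,t₂,…,tₙ) is odd if and only if, for every bit position x, the number of indices i such that the binary representation of tᵢ has a 1 in position x is even. -/
/-!
Reading a word position by position, `aflCount n t` is the coefficient of `x^t` in
`P_t = ∏ᵢ (∑_{j ≠ i} x_j)^{tᵢ}`. Over `𝔽₂` the Frobenius splits `P_t = P_{t mod 2} · P_{⌊t/2⌋}(x²)`,
and as `P_{t mod 2}` is homogeneous of degree `∑ᵢ (tᵢ mod 2)`, the monomial `x^t` can only arise
from `x^{t mod 2}` in the first factor: the coefficient is multiplicative over binary digits.
For a 0/1 exponent with support `I`, write `∑_{j ≠ i} x_j = S + x_i` with `S = ∑ⱼ x_j` and expand: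
the coefficient of `∏_{i ∈ I} x_i` is `∑_{B ⊆ I} |B|! ≡ |I| + 1 (mod 2)`, odd exactly when `|I|` is
even.
-/

open Finset MvPolynomial
open Finsupp (equivFunOnFinite)
open scoped Nat

namespace AFL

variable {σ R : Type*} [Fintype σ] [DecidableEq σ] [CommSemiring R]

lemma prod_X_comp_eq_prod_X_pow {ι : Type*} [Fintype ι] (w : ι → σ) :
    ∏ x, (X (w x) : MvPolynomial σ R) = ∏ j, X j ^ #{x | w x = j} := by
  rw [← prod_fiberwise univ w]
  refine prod_congr rfl fun j _ => ?_
  rw [prod_congr rfl fun x hx => by rw [(mem_filter.1 hx).2], prod_const]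

omit [DecidableEq σ] in
lemma eq_of_add_eq_add_smul {p : ℕ} {e a c q : σ →₀ ℕ} (he : ∀ i, e i < p)
    (hdeg : a.degree = e.degree) (hdvd : ∀ i, p ∣ c i) (h : a + c = e + p • q) : a = e := by
  have hle (i : σ) : e i ≤ a i := by
    obtain ⟨k, hk⟩ := hdvd i
    have hi : (a i + p * k) % p = (e i + p * q i) % p := by
      simpa [hk] using congrArg (fun f => f i % p) h
    rw [Nat.add_mul_mod_self_left, Nat.add_mul_mod_self_left, Nat.mod_eq_of_lt (he i)] at hi
    exact hi ▸ Nat.mod_le _ _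
  rw [Finsupp.degree_eq_sum, Finsupp.degree_eq_sum] at hdeg
  ext i
  exact ((sum_eq_sum_iff_of_le fun i _ => hle i).1 hdeg.symm i (mem_univ i)).symm

lemma coeff_mul_expand {p : ℕ} (hp : p ≠ 0) {G : MvPolynomial σ R} (Q : MvPolynomial σ R)
    {e : σ →₀ ℕ} (he : ∀ i, e i < p) (hG : G.IsHomogeneous e.degree) (q : σ →₀ ℕ) :
    coeff (e + p • q) (G * expand p Q) = coeff e G * coeff q Q := by
  rw [coeff_mul, sum_eq_single (e, p • q)]
  · rw [coeff_expand_smul p hp]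
  · rintro ⟨a, c⟩ hac hne
    simp only [HasAntidiagonal.mem_antidiagonal] at hac
    by_cases hdeg : a.degree = e.degree
    · by_cases hdvd : ∀ i, p ∣ c i
      · obtain rfl := eq_of_add_eq_add_smul he hdeg hdvd hac
        exact (hne (by rw [add_left_cancel hac])).elim
      · push Not at hdvd
        obtain ⟨i, hi⟩ := hdvd
        rw [coeff_expand_of_not_dvd Q hi, mul_zero]
    · rw [hG.coeff_eq_zero hdeg, zero_mul]
  · intro h
    simp at h

omit [DecidableEq σ] in
lemma coeff_indicator_sum_X_pow (B : Finset σ) :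
    coeff (Finsupp.indicator B fun _ _ => 1) ((∑ i, X i : MvPolynomial σ R) ^ #B) = (#B)! := by
  set d : σ →₀ ℕ := Finsupp.indicator B fun _ _ => 1
  have hd : ∀ i ∈ B, d i = 1 := fun i hi => Finsupp.indicator_of_mem hi _
  have hsum : ∑ i ∈ B, d i = #B := by rw [sum_congr rfl hd, card_eq_sum_ones]
  have hspec := Nat.multinomial_spec B d
  rw [prod_congr rfl fun i hi => by rw [hd i hi, Nat.factorial_one], prod_const_one, one_mul,
    hsum] at hspec
  rw [coeff_sum_X_pow_of_fintype, if_pos, Finsupp.multinomial_eq_of_support_subset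
    (Finsupp.support_indicator_subset _ _), hspec]
  rw [Finsupp.sum_of_support_subset _ (Finsupp.support_indicator_subset _ _) _ (by simp), hsum]

omit [Fintype σ] in
lemma indicator_sub_indicator_sdiff {B I : Finset σ} (hB : B ⊆ I) :
    (Finsupp.indicator I fun _ _ => 1) - (Finsupp.indicator (I \ B) fun _ _ => 1) =
      (Finsupp.indicator B fun _ _ => (1 : ℕ)) := by
  ext i
  by_cases hi : i ∈ B
  · simp [Finsupp.indicator_apply, hi, hB hi]
  · by_cases hI : i ∈ I <;> simp [Finsupp.indicator_apply, hi, hI]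

lemma coeff_prod_sum_X_add_X (I : Finset σ) :
    coeff (Finsupp.indicator I fun _ _ => 1)
        (∏ i ∈ I, ((∑ j, X j) + X i : MvPolynomial σ R)) =
      ∑ B ∈ I.powerset, ((#B)! : R) := by
  rw [prod_add, coeff_sum]
  refine sum_congr rfl fun B hB => ?_
  have hB := mem_powerset.1 hB
  have hmono : ∏ i ∈ I \ B, (X i : MvPolynomial σ R) =
      monomial (Finsupp.indicator (I \ B) fun _ _ => 1) 1 := by
    simpa using prod_X_pow (R := R) (fun _ => 1) (I \ B)
  rw [prod_const, hmono, mul_comm, coeff_monomial_mul', if_pos, one_mul,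
    indicator_sub_indicator_sdiff hB, coeff_indicator_sum_X_pow]
  intro i
  by_cases hi : i ∈ I \ B
  · simp [Finsupp.indicator_apply, hi, (mem_sdiff.1 hi).1]
  · simp [Finsupp.indicator_apply, hi]

lemma sum_powerset_factorial_card_zmod_two {α : Type*} (I : Finset α) :
    ∑ B ∈ I.powerset, ((#B)! : ZMod 2) = #I + 1 := by
  have hvanish (m : ℕ) : (((m + 2)! : ℕ) : ZMod 2) = 0 :=
    (ZMod.natCast_eq_zero_iff _ _).2 (Nat.dvd_factorial two_pos (by omega))
  have hextend : ∑ m ∈ range (#I + 1), (#I).choose m • ((m ! : ℕ) : ZMod 2) =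
      ∑ m ∈ range (#I + 2), (#I).choose m • ((m ! : ℕ) : ZMod 2) := by
    rw [sum_range_succ _ (#I + 1), Nat.choose_succ_self, zero_smul, add_zero]
  rw [sum_powerset_apply_card (fun m => ((m ! : ℕ) : ZMod 2)), hextend, sum_range_succ',
    sum_range_succ']
  simp only [hvanish, smul_zero, sum_const_zero, zero_add, Nat.choose_one_right,
    Nat.choose_zero_right, Nat.factorial_one, Nat.factorial_zero, Nat.cast_one, nsmul_eq_mul,
    mul_one, one_smul]

omit [DecidableEq σ] in
lemma forall_even_card_testBit_iff (t : σ → ℕ) :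
    (∀ x, Even #{i | (t i).testBit x}) ↔
      Even #{i | t i % 2 = 1} ∧ ∀ x, Even #{i | (t i / 2).testBit x} := by
  constructor
  · intro h
    exact ⟨by simpa [Nat.testBit_zero] using h 0,
      fun x => by simpa [Nat.testBit_succ] using h (x + 1)⟩
  · rintro ⟨h0, h⟩ (_ | x)
    · simpa [Nat.testBit_zero] using h0
    · simpa [Nat.testBit_succ] using h x

variable (R) in
noncomputable def anagramPoly (t : σ → ℕ) : MvPolynomial σ R :=
  ∏ i, (∑ j ∈ univ.erase i, X j) ^ t i

lemma coeff_anagramPoly (n : ℕ) (t : Fin n → ℕ) :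
    coeff (equivFunOnFinite.symm t) (anagramPoly R t) = aflCount n t := by
  have hpositions : anagramPoly R t = ∏ x : (Σ i, Fin (t i)), ∑ j ∈ univ.erase x.1, X j := by
    rw [anagramPoly, ← univ_sigma_univ, prod_sigma]
    simp only [prod_const, card_fin]
  have hword (w : (Σ i, Fin (t i)) → Fin n) :
      coeff (equivFunOnFinite.symm t) (∏ x, (X (w x) : MvPolynomial (Fin n) R)) =
        if ∀ j, #{x | w x = j} = t j then 1 else 0 := by
    rw [prod_X_comp_eq_prod_X_pow, coeff_prod_X_pow]
    refine if_congr ?_ rfl rfl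
    simp [Finsupp.ext_iff, eq_comm]
  rw [hpositions, prod_univ_sum, coeff_sum, sum_congr rfl fun w _ => hword w, sum_boole,
    aflCount, Fintype.card_subtype]
  congr 2
  ext w
  simp only [mem_filter, Fintype.mem_piFinset, mem_erase, mem_univ, and_true, true_and]
  tauto

lemma isHomogeneous_anagramPoly (t : σ → ℕ) :
    (anagramPoly R t).IsHomogeneous (∑ i, t i) := by
  refine IsHomogeneous.prod _ _ _ fun i _ => ?_
  simpa using ((IsHomogeneous.sum _ _ 1 fun j _ => isHomogeneous_X R j).pow (t i))

lemma anagramPoly_eq_mul_expand (p : ℕ) [Fact p.Prime] (t : σ → ℕ) :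
    anagramPoly (ZMod p) t =
      anagramPoly (ZMod p) (fun i => t i % p) *
        expand p (anagramPoly (ZMod p) fun i => t i / p) := by
  rw [expand_zmod, anagramPoly, anagramPoly, anagramPoly, ← prod_pow, ← prod_mul_distrib]
  refine prod_congr rfl fun i _ => ?_
  rw [← pow_mul, ← pow_add, Nat.mod_add_div']

lemma coeff_anagramPoly_of_lt_two (e : σ → ℕ) (he : ∀ i, e i < 2) :
    coeff (equivFunOnFinite.symm e) (anagramPoly (ZMod 2) e) = #{i | e i = 1} + 1 := by
  set I : Finset σ := {i | e i = 1}
  have hindicator : equivFunOnFinite.symm e = Finsupp.indicator I fun _ _ => 1 := by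
    ext i
    obtain hi | hi : e i = 0 ∨ e i = 1 := by have := he i; omega
    all_goals simp [I, Finsupp.indicator_apply, hi]
  have hpoly : anagramPoly (ZMod 2) e = ∏ i ∈ I, ((∑ j, X j) + X i) := by
    rw [anagramPoly, prod_filter]
    refine prod_congr rfl fun i _ => ?_
    rw [sum_erase_eq_sub (mem_univ i), CharTwo.sub_eq_add]
    obtain hi | hi : e i = 0 ∨ e i = 1 := by have := he i; omega
    all_goals simp [hi]
  rw [hindicator, hpoly, coeff_prod_sum_X_add_X, sum_powerset_factorial_card_zmod_two]

lemma coeff_anagramPoly_eq_mul (t : σ → ℕ) :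
    coeff (equivFunOnFinite.symm t) (anagramPoly (ZMod 2) t) =
      (#{i | t i % 2 = 1} + 1) *
        coeff (equivFunOnFinite.symm fun i => t i / 2) (anagramPoly (ZMod 2) fun i => t i / 2) := by
  have hdigits : equivFunOnFinite.symm t =
      equivFunOnFinite.symm (fun i => t i % 2) + 2 • equivFunOnFinite.symm fun i => t i / 2 := by
    ext i
    simp only [Finsupp.coe_add, Finsupp.coe_equivFunOnFinite_symm, Finsupp.coe_smul,
      nsmul_eq_mul, Nat.cast_ofNat, Pi.add_apply, Pi.mul_apply, Pi.ofNat_apply]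
    omega
  have hlow (i : σ) : t i % 2 < 2 := Nat.mod_lt _ two_pos
  have hhom : (anagramPoly (ZMod 2) fun i => t i % 2).IsHomogeneous
      (equivFunOnFinite.symm fun i => t i % 2).degree := by
    rw [Finsupp.degree_eq_sum]
    exact isHomogeneous_anagramPoly _
  rw [anagramPoly_eq_mul_expand 2, hdigits, coeff_mul_expand two_ne_zero _ hlow hhom,
    coeff_anagramPoly_of_lt_two _ hlow]

theorem coeff_anagramPoly_eq_one_iff (t : σ → ℕ) :
    coeff (equivFunOnFinite.symm t) (anagramPoly (ZMod 2) t) = 1 ↔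
      ∀ x, Even #{i | (t i).testBit x} := by
  induction hN : ∑ i, t i using Nat.strong_induction_on generalizing t with
  | _ N ih =>
  by_cases ht : t = 0
  · subst ht
    simp only [anagramPoly, Pi.zero_apply, pow_zero, prod_const_one, coeff_one]
    rw [if_pos (by ext; simp)]
    simp
  have hlt : ∑ i, t i / 2 < N := by
    obtain ⟨i, hi⟩ := Function.ne_iff.1 ht
    exact hN ▸ sum_lt_sum (fun i _ => Nat.div_le_self _ _)
      ⟨i, mem_univ i, Nat.div_lt_self (Nat.pos_of_ne_zero hi) one_lt_two⟩
  have hmul : ∀ a b : ZMod 2, (a + 1) * b = 1 ↔ a = 0 ∧ b = 1 := by decide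
  rw [coeff_anagramPoly_eq_mul, hmul, ih _ hlt _ rfl, ZMod.natCast_eq_zero_iff_even,
    forall_even_card_testBit_iff t]

end AFL

theorem afl_odd_iff (n : ℕ) (t : Fin n → ℕ) :
    Odd (aflCount n t) ↔
      ∀ x : ℕ, Even ((Finset.univ.filter fun i => (t i).testBit x).card) := by
  rw [← ZMod.natCast_eq_one_iff_odd, ← AFL.coeff_anagramPoly, AFL.coeff_anagramPoly_eq_one_iff]
end

section
/- For positive integers n, l, k, the number n divides P'(k,k,…,k) where the argument list consists of l·n + 1 copies of k. -/
open Equiv Finset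

theorem MulAction.natCard_dvd_natCard_of_stabilizer_eq_bot {G X : Type*} [Group G]
    [MulAction G X] (h : ∀ x : X, stabilizer G x = ⊥) : Nat.card G ∣ Nat.card X := by
  rw [Nat.card_congr (selfEquivOrbitsQuotientProd h), Nat.card_prod]
  exact dvd_mul_left _ _

/-- Position `⟨a, i⟩` originally holds the `i`-th copy of the letter `a`. -/
abbrev Anagram (α : Type*) [Fintype α] [DecidableEq α] (k : ℕ) : Type _ :=
  {w : (Σ _ : α, Fin k) → α // (∀ b, #{x | w x = b} = k) ∧ ∀ x, w x ≠ x.1}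

theorem aflCount_const_eq_natCard_anagram (m k : ℕ) :
    aflCount m (fun _ => k) = Nat.card (Anagram (Fin m) k) := by
  rw [aflCount, Nat.card_eq_fintype_card]

namespace Anagram

variable {α β : Type*} [Fintype α] [DecidableEq α] [Fintype β] [DecidableEq β] (k : ℕ)

def posCongr (e : α ≃ β) : (Σ _ : α, Fin k) ≃ (Σ _ : β, Fin k) where
  toFun x := ⟨e x.1, x.2⟩
  invFun y := ⟨e.symm y.1, y.2⟩
  left_inv _ := by simp
  right_inv _ := by simp

def congr (e : α ≃ β) : Anagram α k ≃ Anagram β k :=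
  (arrowCongr (posCongr k e) e).subtypeEquiv fun w => by
    refine and_congr (e.forall_congr fun b => ?_) ((posCongr k e).forall_congr fun x => ?_)
    · refine Eq.congr_left (card_equiv (posCongr k e) fun x => ?_)
      simp [posCongr]
    · simp [posCongr]

def permHom : Perm α →* Perm (Anagram α k) where
  toFun π := congr k π
  map_one' := by ext; simp [congr, posCongr, Perm.one_def]
  map_mul' _ _ := by ext; simp [congr, posCongr, Perm.mul_def]

variable {G : Type*} [Group G] [MulAction G α]

instance : MulAction G (Anagram α k) :=
  MulAction.compHom _ ((permHom k).comp (MulAction.toPermHom G α))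

theorem smul_apply (g : G) (w : Anagram α k) (x : Σ _ : α, Fin k) :
    (g • w).1 x = g • w.1 ⟨g⁻¹ • x.1, x.2⟩ :=
  rfl

theorem exists_ne_smul_eq_of_smul_eq (hk : k ≠ 0) {g : G} {a : α} (ha : g • a = a)
    {w : Anagram α k} (hw : g • w = w) : ∃ b ≠ a, g • b = b := by
  let x : Σ _ : α, Fin k := ⟨a, ⟨0, Nat.pos_of_ne_zero hk⟩⟩
  refine ⟨w.1 x, w.2.2 x, ?_⟩
  calc g • w.1 x = (g • w).1 x := by rw [smul_apply, inv_smul_eq_iff.2 ha.symm]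
    _ = w.1 x := by rw [hw]

theorem natCard_dvd_natCard (a : α) (hfix : ∀ g : G, g • a = a)
    (hfree : ∀ b ≠ a, MulAction.stabilizer G b = ⊥) (hk : k ≠ 0) :
    Nat.card G ∣ Nat.card (Anagram α k) :=
  MulAction.natCard_dvd_natCard_of_stabilizer_eq_bot fun _ => eq_bot_iff.2 fun g hg =>
    let ⟨b, hb, hgb⟩ := exists_ne_smul_eq_of_smul_eq k hk (hfix g) hg
    (hfree b hb).le hgb

end Anagram

theorem stabilizer_multiplicative_eq_bot_of_ne_none {ι A : Type*} [AddGroup A] :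
    ∀ b : Option (Σ _ : ι, A), b ≠ none → MulAction.stabilizer (Multiplicative A) b = ⊥
  | none, hb => (hb rfl).elim
  | some ⟨i, a⟩, _ => by
    ext g
    rw [MulAction.mem_stabilizer_iff, Option.smul_some, Sigma.smul_mk, Option.some_inj,
      Sigma.mk.injEq]
    simp [← toAdd_vadd]

theorem afl_divisibility_general (n l k : ℕ) (hn : 1 ≤ n) (hk : 1 ≤ k) :
    n ∣ aflCount (l * n + 1) (fun _ => k) := by
  have : NeZero n := ⟨by omega⟩
  have e : Fin (l * n + 1) ≃ Option (Σ _ : Fin l, ZMod n) :=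
    Fintype.equivOfCardEq (by simp [Fintype.card_sigma, ZMod.card])
  rw [aflCount_const_eq_natCard_anagram, Nat.card_congr (Anagram.congr k e)]
  simpa only [Nat.card_eq_fintype_card, Fintype.card_multiplicative, ZMod.card] using
    Anagram.natCard_dvd_natCard k none (fun _ => rfl)
      (stabilizer_multiplicative_eq_bot_of_ne_none (ι := Fin l) (A := ZMod n)) (by omega)

theorem afl_divisibility (n l k : ℕ) (hn : 1 ≤ n) (hl : 1 ≤ l) (hk : 1 ≤ k) :
    n ∣ aflCount (l * n + 1) (fun _ => k) :=
  afl_divisibility_general n l k hn hk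
end
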